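/- arXiv:2010.02707 — 6 statements merged into one kernel-verified Lean document; each statement's English description precedes it below -/
import Mathlib

section
/- Let N ≥ 1, s ∈ (1/2,1), and let u(x) = g(|x|) where g satisfies the radial profile hypothesis (H1). Then for every x ∈ ℝ^N with x ≠ 0 and every unit vector ξ ∈ ℝ^N one has 𝓘_{x^⊥} u(x) ≤ 𝓘_ξ u(x) ≤ 𝓘_{x̂} u(x), where x̂ = x/|x| and x^⊥ is any unit vector orthogonal to x. Consequently 𝓘_1^+ u(x) = 𝓘_{x̂} u(x) and 𝓘_1^- u(x) = 𝓘_{x^⊥} u(x). -/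
/-!
Write `g̃ t = g (√t)`, `r = ‖x‖` and `a = ⟪x, ν⟫` for a unit vector `ν`. Since
`‖x ± τν‖² = r² + τ² ± 2τa`, the integrand of `𝓘_ν u(x)` is
`g̃ (r² + τ² + 2τa) + g̃ (r² + τ² - 2τa) - 2 g̃ (r²)`, which depends on `ν` only through `a`.
As `g̃` is convex (its derivative is nondecreasing), this second difference is nondecreasing in
`|a| ∈ [0, r]` for every `τ ≠ r`. Hence `𝓘_ν u(x)` is smallest for `a = 0` (`ν ⊥ x`) and largest
for `|a| = r` (`ν = x / ‖x‖`). The integrals make sense because every integrand is squeezed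
between the two extreme ones, which are `O(τ²)` near `τ = 0` by a second-order Taylor bound
and are controlled at infinity by the weighted integrability of `g`.
-/

open MeasureTheory Real Set

noncomputable section

abbrev E (N : ℕ) := EuclideanSpace ℝ (Fin N)

/-- The one-dimensional directional fractional operator `𝓘_ξ u(x)`. -/
noncomputable def Iop (N : ℕ) (s Cs : ℝ) (u : E N → ℝ) (ξ x : E N) : ℝ :=
  Cs * ∫ τ in Ioi (0:ℝ), (u (x + τ • ξ) + u (x - τ • ξ) - 2 * u x) * τ ^ (-(1 + 2*s))

/-- `𝓘_k^+ u(x)`: supremum over orthonormal `k`-frames. -/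
noncomputable def IkPlus (N k : ℕ) (s Cs : ℝ) (u : E N → ℝ) (x : E N) : ℝ :=
  ⨆ ξ : {ξ : Fin k → E N // Orthonormal ℝ ξ}, ∑ i, Iop N s Cs u (ξ.1 i) x

/-- `𝓘_k^- u(x)`: infimum over orthonormal `k`-frames. -/
noncomputable def IkMinus (N k : ℕ) (s Cs : ℝ) (u : E N → ℝ) (x : E N) : ℝ :=
  ⨅ ξ : {ξ : Fin k → E N // Orthonormal ℝ ξ}, ∑ i, Iop N s Cs u (ξ.1 i) x

def gtilde (g : ℝ → ℝ) : ℝ → ℝ := fun t => g (Real.sqrt t)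

/-- `g ∈ L¹_σ(ρ,∞)`. -/
def MemL1w (σ ρ : ℝ) (g : ℝ → ℝ) : Prop :=
  IntegrableOn (fun τ => g τ / (1 + τ ^ (1 + σ))) (Ioi ρ)

/-- The radial profile hypothesis (H1). -/
def HypH1 (s : ℝ) (g : ℝ → ℝ) : Prop :=
  ContDiffOn ℝ 2 g (Ioi 0) ∧ MemL1w (2*s) 0 g ∧
  MonotoneOn (deriv (gtilde g)) (Ioi 0) ∧
  ∃ ρ > 0, MemL1w (s - 1/2) ρ (deriv (gtilde g))

open scoped NNReal

theorem ConvexOn.map_add_add_map_sub_le {D : Set ℝ} {G : ℝ → ℝ} (hG : ConvexOn ℝ D G)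
    {c h₁ h₂ : ℝ} (h₁_nonneg : 0 ≤ h₁) (h₁₂ : h₁ ≤ h₂) (hadd : c + h₂ ∈ D) (hsub : c - h₂ ∈ D) :
    G (c + h₁) + G (c - h₁) ≤ G (c + h₂) + G (c - h₂) := by
  rcases (h₁_nonneg.trans h₁₂).eq_or_lt with h₂_zero | h₂_pos
  · obtain rfl : h₁ = 0 := by linarith
    rw [← h₂_zero]
  set t₁ := (h₂ + h₁) / (2 * h₂)
  set t₂ := (h₂ - h₁) / (2 * h₂)
  have ht₁ : 0 ≤ t₁ := by positivity
  have ht₂ : 0 ≤ t₂ := div_nonneg (by linarith) (by positivity)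
  have ht_sum : t₁ + t₂ = 1 := by simp only [t₁, t₂]; field_simp; ring
  have hplus := hG.2 hadd hsub ht₁ ht₂ ht_sum
  have hminus := hG.2 hadd hsub ht₂ ht₁ (by linarith)
  have e₁ : t₁ • (c + h₂) + t₂ • (c - h₂) = c + h₁ := by
    simp only [smul_eq_mul, t₁, t₂]; field_simp; ring
  have e₂ : t₂ • (c + h₂) + t₁ • (c - h₂) = c - h₁ := by
    simp only [smul_eq_mul, t₁, t₂]; field_simp; ring
  rw [e₁] at hplus
  rw [e₂] at hminus
  simp only [smul_eq_mul] at hplus hminus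
  linear_combination hplus + hminus + (G (c + h₂) + G (c - h₂)) * ht_sum

theorem LipschitzOnWith.abs_sub_sub_deriv_mul_le {f : ℝ → ℝ} {s : Set ℝ} {K : ℝ≥0}
    (hK : LipschitzOnWith K (deriv f) s) (hs : Convex ℝ s)
    (hf : ∀ x ∈ s, DifferentiableAt ℝ f x) {x y : ℝ} (hx : x ∈ s) (hy : y ∈ s) :
    |f y - f x - deriv f x * (y - x)| ≤ K * (y - x) ^ 2 := by
  have hxy : uIcc x y ⊆ s := hs.ordConnected.uIcc_subset hx hy
  have hderiv : ∀ t ∈ uIcc x y, HasDerivWithinAt (fun t => f t - deriv f x * t)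
      (deriv f t - deriv f x) (uIcc x y) t := fun t ht => by
    simpa using ((hf t (hxy ht)).hasDerivAt.fun_sub ((hasDerivAt_id' t).const_mul (deriv f x))
      ).hasDerivWithinAt
  have hbound : ∀ t ∈ uIcc x y, ‖deriv f t - deriv f x‖ ≤ K * |y - x| := fun t ht =>
    calc ‖deriv f t - deriv f x‖ ≤ K * |t - x| := hK.dist_le_mul t (hxy ht) x hx
      _ ≤ K * |y - x| := mul_le_mul_of_nonneg_left (abs_sub_left_of_mem_uIcc ht) K.2
  have := (convex_uIcc x y).norm_image_sub_le_of_norm_hasDerivWithin_le hderiv hbound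
    left_mem_uIcc right_mem_uIcc
  rw [Real.norm_eq_abs, Real.norm_eq_abs] at this
  calc |f y - f x - deriv f x * (y - x)| = |f y - deriv f x * y - (f x - deriv f x * x)| := by
        ring_nf
    _ ≤ K * |y - x| * |y - x| := this
    _ = K * (y - x) ^ 2 := by rw [mul_assoc, ← sq, sq_abs]

theorem rpow_neg_mul_one_add_rpow_le {p T τ y A : ℝ} (hp : 0 < p) (hT : 0 < T) (hTτ : T < τ)
    (hy : 0 ≤ y) (hyA : y ≤ A * τ) : τ ^ (-p) * (1 + y ^ p) ≤ T ^ (-p) + A ^ p := by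
  have hτ : 0 < τ := hT.trans hTτ
  have hA : 0 ≤ A := nonneg_of_mul_nonneg_left (hy.trans hyA) hτ
  have h₁ : τ ^ (-p) ≤ T ^ (-p) := Real.rpow_le_rpow_of_nonpos hT hTτ.le (by linarith)
  have h₂ : τ ^ (-p) * y ^ p ≤ A ^ p :=
    calc τ ^ (-p) * y ^ p ≤ τ ^ (-p) * (A * τ) ^ p := by gcongr
      _ = A ^ p * (τ ^ (-p) * τ ^ p) := by rw [Real.mul_rpow hA hτ.le]; ring
      _ = A ^ p := by rw [← Real.rpow_add hτ, neg_add_cancel, Real.rpow_zero, mul_one]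
  linarith [mul_add (τ ^ (-p)) 1 (y ^ p)]

theorem MeasureTheory.IntegrableOn.comp_mul_rpow_neg {g : ℝ → ℝ} {p : ℝ} (hp : 0 < p)
    (hg_cont : ContinuousOn g (Ioi 0)) (hg : IntegrableOn (fun σ => g σ / (1 + σ ^ p)) (Ioi 0))
    {S : Set ℝ} {T A B : ℝ} (hS : MeasurableSet S) (hT : 0 < T) (hST : S ⊆ Ioi T)
    {φ φ' : ℝ → ℝ} (hφ : ∀ τ ∈ S, HasDerivWithinAt φ (φ' τ) S τ) (hinj : InjOn φ S)
    (hφ_pos : ∀ τ ∈ S, 0 < φ τ) (hφ_le : ∀ τ ∈ S, φ τ ≤ A * τ)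
    (hφ' : ∀ τ ∈ S, 1 ≤ B * |φ' τ|) :
    IntegrableOn (fun τ => g (φ τ) * τ ^ (-p)) S := by
  -- the substitution `σ = φ τ`; the hypotheses on `φ` make `τ ^ (-p)` at most a multiple of
  -- `|φ' τ| / (1 + φ τ ^ p)`
  have hcv : IntegrableOn (fun τ => |φ' τ| * ‖g (φ τ) / (1 + φ τ ^ p)‖) S := by
    have himage : φ '' S ⊆ Ioi 0 := by rintro _ ⟨τ, hτ, rfl⟩; exact hφ_pos τ hτ
    have hnorm : IntegrableOn (fun σ => ‖g σ / (1 + σ ^ p)‖) (Ioi 0) := hg.norm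
    simpa only [smul_eq_mul] using (integrableOn_image_iff_integrableOn_abs_deriv_smul hS hφ hinj
      _).mp (hnorm.mono_set himage)
  have hmeas : ContinuousOn (fun τ => g (φ τ) * τ ^ (-p)) S :=
    (hg_cont.comp (fun τ hτ => (hφ τ hτ).continuousWithinAt) hφ_pos).mul
      (fun τ hτ => (Real.continuousAt_rpow_const τ _
        (Or.inl (hT.trans (hST hτ)).ne')).continuousWithinAt)
  refine (hcv.const_mul (B * (T ^ (-p) + A ^ p))).mono' (hmeas.aestronglyMeasurable hS) ?_
  refine (ae_restrict_iff' hS).mpr (ae_of_all _ fun τ hτ => ?_)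
  have hτ₀ : 0 < τ := hT.trans (hST hτ)
  have hden : 0 < 1 + φ τ ^ p := by have := hφ_pos τ hτ; positivity
  have hweight := rpow_neg_mul_one_add_rpow_le hp hT (hST hτ) (hφ_pos τ hτ).le (hφ_le τ hτ)
  set q := ‖g (φ τ) / (1 + φ τ ^ p)‖
  have hq : 0 ≤ q := norm_nonneg _
  calc ‖g (φ τ) * τ ^ (-p)‖ = q * (τ ^ (-p) * (1 + φ τ ^ p)) := by
        simp only [q, norm_mul, norm_div, Real.norm_eq_abs, abs_of_pos hden,
          abs_of_pos (Real.rpow_pos_of_pos hτ₀ (-p))]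
        field_simp
    _ ≤ q * (T ^ (-p) + A ^ p) := by gcongr
    _ ≤ q * (T ^ (-p) + A ^ p) * (B * |φ' τ|) :=
        le_mul_of_one_le_right (mul_nonneg hq ((by positivity : (0:ℝ) ≤ _).trans hweight))
          (hφ' τ hτ)
    _ = B * (T ^ (-p) + A ^ p) * (|φ' τ| * q) := by ring

theorem integrableOn_Ioc_mul_rpow_neg_of_abs_le_sq {f : ℝ → ℝ} {p δ C : ℝ} (hp : p < 3)
    (hf : AEStronglyMeasurable f (volume.restrict (Ioc 0 δ)))
    (hC : ∀ τ ∈ Ioc 0 δ, |f τ| ≤ C * τ ^ 2) :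
    IntegrableOn (fun τ => f τ * τ ^ (-p)) (Ioc 0 δ) := by
  have hpow : IntegrableOn (fun τ : ℝ => τ ^ (2 - p)) (Ioc 0 δ) :=
    (intervalIntegral.intervalIntegrable_rpow' (by linarith)).1
  refine (hpow.const_mul C).mono'
    (hf.mul (measurable_id.pow_const (-p)).aestronglyMeasurable) ?_
  refine (ae_restrict_iff' measurableSet_Ioc).mpr (ae_of_all _ fun τ hτ => ?_)
  have hτ₀ : 0 < τ := hτ.1
  calc ‖f τ * τ ^ (-p)‖ = |f τ| * τ ^ (-p) := by
        rw [Real.norm_eq_abs, abs_mul, abs_of_pos (Real.rpow_pos_of_pos hτ₀ _)]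
    _ ≤ C * τ ^ 2 * τ ^ (-p) := by gcongr; exact hC τ hτ
    _ = C * τ ^ (2 - p) := by
        rw [mul_assoc, ← Real.rpow_natCast, ← Real.rpow_add hτ₀]; norm_num [sub_eq_add_neg]

def radialSecondDiff (G : ℝ → ℝ) (r a τ : ℝ) : ℝ :=
  G (r ^ 2 + τ ^ 2 + 2 * τ * a) + G (r ^ 2 + τ ^ 2 - 2 * τ * a) - 2 * G (r ^ 2)

namespace radialSecondDiff

variable {G : ℝ → ℝ} {r a b τ : ℝ}

theorem neg_right (G : ℝ → ℝ) (r a τ : ℝ) :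
    radialSecondDiff G r (-a) τ = radialSecondDiff G r a τ := by
  simp only [radialSecondDiff, mul_neg, sub_neg_eq_add, ← sub_eq_add_neg]
  ring

theorem abs_right (G : ℝ → ℝ) (r a τ : ℝ) :
    radialSecondDiff G r |a| τ = radialSecondDiff G r a τ := by
  rcases abs_choice a with h | h <;> rw [h]
  exact neg_right G r a τ

theorem measurable (hG : Measurable G) (r a : ℝ) : Measurable (radialSecondDiff G r a) := by
  unfold radialSecondDiff
  fun_prop

theorem le_of_abs_le (hG : ConvexOn ℝ (Ioi 0) G) (hτ : 0 ≤ τ) (hτr : τ ≠ r)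
    (hab : |a| ≤ |b|) (hbr : |b| ≤ r) : radialSecondDiff G r a τ ≤ radialSecondDiff G r b τ := by
  rw [← abs_right G r a, ← abs_right G r b]
  have hgap : 0 < (r - τ) ^ 2 := by positivity [sub_ne_zero.mpr hτr.symm]
  have hb_le : 2 * τ * |b| ≤ 2 * τ * r := by gcongr
  have := hG.map_add_add_map_sub_le (c := r ^ 2 + τ ^ 2) (h₁ := 2 * τ * |a|)
    (h₂ := 2 * τ * |b|) (by positivity) (by gcongr)
    (show _ ∈ Ioi 0 by simp only [mem_Ioi]; nlinarith [abs_nonneg b])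
    (show _ ∈ Ioi 0 by simp only [mem_Ioi]; nlinarith)
  simp only [radialSecondDiff]
  linarith

theorem abs_le_mul_sq (hG : ContDiffOn ℝ 2 G (Ioi 0)) (hr : 0 < r) :
    ∃ C, ∀ a τ, |a| ≤ r → τ ∈ Ioc 0 (r / 2) → |radialSecondDiff G r a τ| ≤ C * τ ^ 2 := by
  -- for `τ ≤ r / 2` and `|a| ≤ r`, `r² + τ² ± 2τa` lies in `[(r - τ)², (r + τ)²] ⊆ I`
  set I := Icc (r ^ 2 / 4) (3 * r ^ 2)
  have hI : I ⊆ Ioi 0 := fun y hy => lt_of_lt_of_le (by positivity) hy.1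
  obtain ⟨L, hL⟩ := ((hG.deriv_of_isOpen isOpen_Ioi (by norm_num)).mono hI).exists_lipschitzOnWith
    one_ne_zero (convex_Icc _ _) isCompact_Icc
  have hdiff : ∀ y ∈ I, DifferentiableAt ℝ G y := fun y hy =>
    (hG.differentiableOn (by norm_num)).differentiableAt (isOpen_Ioi.mem_nhds (hI hy))
  set D := deriv G (r ^ 2)
  have htaylor : ∀ h, r ^ 2 + h ∈ I → |G (r ^ 2 + h) - G (r ^ 2) - D * h| ≤ L * h ^ 2 := by
    intro h hh
    have := hL.abs_sub_sub_deriv_mul_le (convex_Icc _ _) hdiff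
      (⟨by nlinarith, by nlinarith⟩ : r ^ 2 ∈ I) hh
    simpa only [add_sub_cancel_left] using this
  refine ⟨18 * L * r ^ 2 + 2 * |D|, fun a τ ha hτ => ?_⟩
  obtain ⟨hτ₀, hτr⟩ := hτ
  have ha' := abs_le.mp ha
  have hsmall : ∀ h, |h| ≤ 3 * r * τ → h ^ 2 ≤ 9 * r ^ 2 * τ ^ 2 := fun h hh => by
    nlinarith [sq_abs h, abs_nonneg h]
  have hplus := htaylor (τ ^ 2 + 2 * τ * a) ⟨by nlinarith, by nlinarith⟩
  have hminus := htaylor (τ ^ 2 - 2 * τ * a) ⟨by nlinarith, by nlinarith⟩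
  have hsq_plus := hsmall (τ ^ 2 + 2 * τ * a) (abs_le.mpr ⟨by nlinarith, by nlinarith⟩)
  have hsq_minus := hsmall (τ ^ 2 - 2 * τ * a) (abs_le.mpr ⟨by nlinarith, by nlinarith⟩)
  have hsplit : radialSecondDiff G r a τ =
      (G (r ^ 2 + (τ ^ 2 + 2 * τ * a)) - G (r ^ 2) - D * (τ ^ 2 + 2 * τ * a)) +
      (G (r ^ 2 + (τ ^ 2 - 2 * τ * a)) - G (r ^ 2) - D * (τ ^ 2 - 2 * τ * a)) +
      D * (2 * τ ^ 2) := by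
    simp only [radialSecondDiff, add_assoc, add_sub_assoc]
    ring
  rw [hsplit]
  calc _ ≤ L * (τ ^ 2 + 2 * τ * a) ^ 2 + L * (τ ^ 2 - 2 * τ * a) ^ 2 + |D| * (2 * τ ^ 2) := by
        refine (abs_add_le _ _).trans (add_le_add ((abs_add_le _ _).trans (add_le_add hplus hminus))
          ?_)
        rw [abs_mul, abs_of_nonneg (by positivity : (0:ℝ) ≤ 2 * τ ^ 2)]
    _ ≤ (18 * L * r ^ 2 + 2 * |D|) * τ ^ 2 := by
        nlinarith [L.2]

end radialSecondDiff

section gtilde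

variable {g : ℝ → ℝ}

theorem contDiffOn_gtilde (hg : ContDiffOn ℝ 2 g (Ioi 0)) : ContDiffOn ℝ 2 (gtilde g) (Ioi 0) :=
  hg.comp (fun _ ht => (Real.contDiffAt_sqrt (ne_of_gt ht)).contDiffWithinAt)
    (fun _ ht => Real.sqrt_pos.mpr ht)

theorem convexOn_gtilde (hg : ContDiffOn ℝ 2 g (Ioi 0))
    (hmono : MonotoneOn (deriv (gtilde g)) (Ioi 0)) : ConvexOn ℝ (Ioi 0) (gtilde g) := by
  have hG := contDiffOn_gtilde hg
  refine MonotoneOn.convexOn_of_deriv (convex_Ioi 0) hG.continuousOn ?_ (by rwa [interior_Ioi])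
  rw [interior_Ioi]
  exact hG.differentiableOn (by norm_num)

theorem measurable_gtilde (hg : ContinuousOn g (Ioi 0)) : Measurable (gtilde g) := by
  classical
  -- `√t = 0` for `t ≤ 0`, so `gtilde g` is the constant `g 0` there
  have : gtilde g = (Ioi 0).piecewise (gtilde g) (fun _ => g 0) := by
    ext t
    by_cases ht : t ∈ Ioi (0:ℝ)
    · simp [ht]
    · simp [ht, gtilde, Real.sqrt_eq_zero'.mpr (not_lt.mp ht)]
  rw [this]
  exact ContinuousOn.measurable_piecewise
    (hg.comp (Real.continuous_sqrt.continuousOn) (fun _ ht => Real.sqrt_pos.mpr ht))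
    continuousOn_const measurableSet_Ioi

theorem radialSecondDiff_gtilde_zero (r τ : ℝ) :
    radialSecondDiff (gtilde g) r 0 τ = 2 * g √(r ^ 2 + τ ^ 2) - 2 * gtilde g (r ^ 2) := by
  simp only [radialSecondDiff, gtilde, mul_zero, add_zero, sub_zero]
  ring

theorem radialSecondDiff_gtilde_self {r τ : ℝ} (hr : 0 ≤ r) (hτ : 0 ≤ τ) :
    radialSecondDiff (gtilde g) r r τ = g (τ + r) + g |r - τ| - 2 * g r := by
  simp only [radialSecondDiff, gtilde]
  rw [show r ^ 2 + τ ^ 2 + 2 * τ * r = (τ + r) ^ 2 by ring,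
    show r ^ 2 + τ ^ 2 - 2 * τ * r = (r - τ) ^ 2 by ring, Real.sqrt_sq (by positivity),
    Real.sqrt_sq_eq_abs, Real.sqrt_sq hr]

end gtilde

section tails

variable {g : ℝ → ℝ} {p r : ℝ}

theorem integrableOn_radialSecondDiff_gtilde_zero_Ioi (hp : 1 < p)
    (hg_cont : ContinuousOn g (Ioi 0)) (hg : IntegrableOn (fun σ => g σ / (1 + σ ^ p)) (Ioi 0))
    (hr : 0 < r) :
    IntegrableOn (fun τ => radialSecondDiff (gtilde g) r 0 τ * τ ^ (-p)) (Ioi (r / 2)) := by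
  have hle : ∀ τ ∈ Ioi (r / 2), √(r ^ 2 + τ ^ 2) ≤ 3 * τ := fun τ hτ =>
    Real.sqrt_le_iff.mpr ⟨by linarith [mem_Ioi.mp hτ], by nlinarith [mem_Ioi.mp hτ]⟩
  have hderiv : ∀ τ ∈ Ioi (r / 2), HasDerivWithinAt (fun τ => √(r ^ 2 + τ ^ 2))
      (τ / √(r ^ 2 + τ ^ 2)) (Ioi (r / 2)) τ := fun τ _ => by
    refine ((((hasDerivAt_pow 2 τ).const_add (r ^ 2)).sqrt (by positivity)).congr_deriv ?_
      ).hasDerivWithinAt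
    field_simp
    ring
  have hinj : InjOn (fun τ => √(r ^ 2 + τ ^ 2)) (Ioi (r / 2)) :=
    StrictMonoOn.injOn fun a ha b _ hab =>
      Real.sqrt_lt_sqrt (by positivity) (by nlinarith [mem_Ioi.mp ha, half_pos hr])
  have hsqrt := hg.comp_mul_rpow_neg (B := 3) (by linarith) hg_cont measurableSet_Ioi
    (half_pos hr) subset_rfl hderiv hinj (fun τ _ => by positivity) hle fun τ hτ => by
      have hτ₀ : 0 < τ := (half_pos hr).trans hτ
      rw [abs_of_pos (by positivity), mul_div_assoc', le_div_iff₀ (by positivity), one_mul]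
      exact hle τ hτ
  have hconst : IntegrableOn (fun τ : ℝ => τ ^ (-p)) (Ioi (r / 2)) :=
    integrableOn_Ioi_rpow_of_lt (by linarith) (half_pos hr)
  refine IntegrableOn.congr_fun ((hsqrt.const_mul 2).sub (hconst.const_mul (2 * gtilde g (r ^ 2))))
    (fun τ _ => ?_) measurableSet_Ioi
  rw [Pi.sub_apply, radialSecondDiff_gtilde_zero]
  ring

theorem integrableOn_radialSecondDiff_gtilde_self_Ioi (hp : 1 < p)
    (hg_cont : ContinuousOn g (Ioi 0)) (hg : IntegrableOn (fun σ => g σ / (1 + σ ^ p)) (Ioi 0))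
    (hr : 0 < r) :
    IntegrableOn (fun τ => radialSecondDiff (gtilde g) r r τ * τ ^ (-p)) (Ioi (r / 2)) := by
  have hr₂ : 0 < r / 2 := half_pos hr
  have hderiv_add : ∀ S : Set ℝ, ∀ τ ∈ S, HasDerivWithinAt (fun τ => τ + r) 1 S τ :=
    fun _ τ _ => ((hasDerivAt_id' τ).add_const r).hasDerivWithinAt
  have hderiv_sub : ∀ S : Set ℝ, ∀ τ ∈ S, HasDerivWithinAt (fun τ => τ - r) 1 S τ :=
    fun _ τ _ => ((hasDerivAt_id' τ).sub_const r).hasDerivWithinAt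
  have hderiv_rsub : ∀ S : Set ℝ, ∀ τ ∈ S, HasDerivWithinAt (fun τ => r - τ) (-1) S τ :=
    fun _ τ _ => ((hasDerivAt_id' τ).const_sub r).hasDerivWithinAt
  have hadd : IntegrableOn (fun τ => g (τ + r) * τ ^ (-p)) (Ioi (r / 2)) :=
    hg.comp_mul_rpow_neg (A := 3) (B := 1) (by linarith) hg_cont measurableSet_Ioi hr₂ subset_rfl
      (hderiv_add _) (add_left_injective r).injOn (fun τ hτ => by linarith [mem_Ioi.mp hτ])
      (fun τ hτ => by linarith [mem_Ioi.mp hτ]) (fun _ _ => by norm_num)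
  have hbelow : IntegrableOn (fun τ => g (r - τ) * τ ^ (-p)) (Ioo (r / 2) r) :=
    hg.comp_mul_rpow_neg (A := 2) (B := 1) (by linarith) hg_cont measurableSet_Ioo hr₂
      Ioo_subset_Ioi_self (hderiv_rsub _) (fun a _ b _ h => by linarith [show r - a = r - b from h])
      (fun τ hτ => by linarith [hτ.2]) (fun τ hτ => by linarith [hτ.1]) (fun _ _ => by norm_num)
  have habove : IntegrableOn (fun τ => g (τ - r) * τ ^ (-p)) (Ioi r) :=
    hg.comp_mul_rpow_neg (A := 1) (B := 1) (by linarith) hg_cont measurableSet_Ioi hr subset_rfl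
      (hderiv_sub _) (fun a _ b _ h => by linarith [show a - r = b - r from h])
      (fun τ hτ => by linarith [mem_Ioi.mp hτ]) (fun τ hτ => by linarith [mem_Ioi.mp hτ])
      (fun _ _ => by norm_num)
  have habs : IntegrableOn (fun τ => g |r - τ| * τ ^ (-p)) (Ioi (r / 2)) := by
    rw [← Ioo_union_Ici_eq_Ioi (half_lt_self hr)]
    refine IntegrableOn.union (hbelow.congr_fun (fun τ hτ => ?_) measurableSet_Ioo)
      ((integrableOn_Ici_iff_integrableOn_Ioi).mpr
        (habove.congr_fun (fun τ hτ => ?_) measurableSet_Ioi))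
    · rw [abs_of_pos (sub_pos.mpr hτ.2)]
    · rw [abs_sub_comm, abs_of_pos (sub_pos.mpr hτ)]
  have hconst : IntegrableOn (fun τ : ℝ => τ ^ (-p)) (Ioi (r / 2)) :=
    integrableOn_Ioi_rpow_of_lt (by linarith) hr₂
  refine IntegrableOn.congr_fun ((hadd.add habs).sub (hconst.const_mul (2 * g r)))
    (fun τ hτ => ?_) measurableSet_Ioi
  rw [Pi.sub_apply, Pi.add_apply, radialSecondDiff_gtilde_self hr.le (hr₂.trans hτ).le]
  ring

end tails

section integral

variable {g : ℝ → ℝ} {p r a b : ℝ}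

theorem integrableOn_radialSecondDiff_gtilde (hp₁ : 1 < p) (hp₃ : p < 3)
    (hg : ContDiffOn ℝ 2 g (Ioi 0)) (hmono : MonotoneOn (deriv (gtilde g)) (Ioi 0))
    (hgw : IntegrableOn (fun σ => g σ / (1 + σ ^ p)) (Ioi 0)) (hr : 0 < r) (ha : |a| ≤ r) :
    IntegrableOn (fun τ => radialSecondDiff (gtilde g) r a τ * τ ^ (-p)) (Ioi 0) := by
  have hmeas := radialSecondDiff.measurable (measurable_gtilde hg.continuousOn) r a
  rw [← Ioc_union_Ioi_eq_Ioi (half_pos hr).le]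
  refine IntegrableOn.union ?_ ?_
  · obtain ⟨C, hC⟩ := radialSecondDiff.abs_le_mul_sq (contDiffOn_gtilde hg) hr
    exact integrableOn_Ioc_mul_rpow_neg_of_abs_le_sq hp₃ hmeas.aestronglyMeasurable
      (hC a · ha)
  -- away from `τ = 0` the kernel is squeezed between its values at `a = 0` and `a = r`
  have hzero := integrableOn_radialSecondDiff_gtilde_zero_Ioi hp₁ hg.continuousOn hgw hr
  have hself := integrableOn_radialSecondDiff_gtilde_self_Ioi hp₁ hg.continuousOn hgw hr
  refine (hzero.norm.add hself.norm).mono'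
    (hmeas.mul (measurable_id.pow_const _)).aestronglyMeasurable ?_
  filter_upwards [ae_restrict_mem measurableSet_Ioi, ae_restrict_of_ae (volume.ae_ne r)]
    with τ hτ hτr
  have hτ₀ : 0 < τ := (half_pos hr).trans hτ
  have hconv := convexOn_gtilde hg hmono
  have hlow := radialSecondDiff.le_of_abs_le hconv hτ₀.le hτr (a := 0) (by simp) ha
  have hup := radialSecondDiff.le_of_abs_le hconv hτ₀.le hτr (ha.trans (le_abs_self r))
    (abs_of_pos hr).le
  have hw : 0 < τ ^ (-p) := Real.rpow_pos_of_pos hτ₀ _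
  simp only [Pi.add_apply, norm_mul, Real.norm_eq_abs, abs_of_pos hw, ← add_mul]
  gcongr
  exact (abs_le_max_abs_abs hlow hup).trans (max_le_add_of_nonneg (abs_nonneg _) (abs_nonneg _))

theorem integral_radialSecondDiff_gtilde_mono (hp₁ : 1 < p) (hp₃ : p < 3)
    (hg : ContDiffOn ℝ 2 g (Ioi 0)) (hmono : MonotoneOn (deriv (gtilde g)) (Ioi 0))
    (hgw : IntegrableOn (fun σ => g σ / (1 + σ ^ p)) (Ioi 0)) (hr : 0 < r)
    (hab : |a| ≤ |b|) (hb : |b| ≤ r) :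
    ∫ τ in Ioi 0, radialSecondDiff (gtilde g) r a τ * τ ^ (-p) ≤
      ∫ τ in Ioi 0, radialSecondDiff (gtilde g) r b τ * τ ^ (-p) := by
  refine integral_mono_ae
    (integrableOn_radialSecondDiff_gtilde hp₁ hp₃ hg hmono hgw hr (hab.trans hb))
    (integrableOn_radialSecondDiff_gtilde hp₁ hp₃ hg hmono hgw hr hb) ?_
  filter_upwards [ae_restrict_mem measurableSet_Ioi, ae_restrict_of_ae (volume.ae_ne r)]
    with τ hτ hτr
  exact mul_le_mul_of_nonneg_right
    (radialSecondDiff.le_of_abs_le (convexOn_gtilde hg hmono) (le_of_lt hτ) hτr hab hb)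
    (Real.rpow_nonneg (le_of_lt hτ) _)

end integral

section operator

variable {N : ℕ} {s Cs : ℝ} {u : E N → ℝ} {g : ℝ → ℝ} {x ν ν' : E N}

theorem Iop_eq_integral_radialSecondDiff (hu : ∀ y, u y = g ‖y‖) (hν : ‖ν‖ = 1) :
    Iop N s Cs u ν x =
      Cs * ∫ τ in Ioi 0, radialSecondDiff (gtilde g) ‖x‖ (inner ℝ x ν) τ * τ ^ (-(1 + 2 * s)) := by
  have hu' : ∀ y, u y = gtilde g (‖y‖ ^ 2) := fun y => by
    rw [hu, gtilde, Real.sqrt_sq (norm_nonneg y)]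
  have hnorm : ∀ τ : ℝ, ‖τ • ν‖ ^ 2 = τ ^ 2 := fun τ => by
    rw [norm_smul, hν, mul_one, Real.norm_eq_abs, sq_abs]
  unfold Iop radialSecondDiff
  congr 2 with τ
  rw [hu', hu', hu', norm_add_sq_real, norm_sub_sq_real, hnorm, real_inner_smul_right]
  ring_nf

theorem Iop_le_Iop_of_abs_inner_le (hs : s ∈ Ioo (1 / 2 : ℝ) 1) (hCs : 0 ≤ Cs)
    (hg : ContDiffOn ℝ 2 g (Ioi 0)) (hmono : MonotoneOn (deriv (gtilde g)) (Ioi 0))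
    (hgw : MemL1w (2 * s) 0 g) (hu : ∀ y, u y = g ‖y‖) (hx : x ≠ 0)
    (hν : ‖ν‖ = 1) (hν' : ‖ν'‖ = 1) (h : |inner ℝ x ν| ≤ |inner ℝ x ν'|) :
    Iop N s Cs u ν x ≤ Iop N s Cs u ν' x := by
  rw [Iop_eq_integral_radialSecondDiff hu hν, Iop_eq_integral_radialSecondDiff hu hν']
  have hinner : |inner ℝ x ν'| ≤ ‖x‖ := by simpa [hν'] using abs_real_inner_le_norm x ν'
  exact mul_le_mul_of_nonneg_left (integral_radialSecondDiff_gtilde_mono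
    (by linarith [hs.1]) (by linarith [hs.2]) hg hmono hgw (norm_pos_iff.mpr hx) h hinner) hCs

theorem IkPlus_one_eq_of_forall_le (hν : ‖ν‖ = 1)
    (h : ∀ ν', ‖ν'‖ = 1 → Iop N s Cs u ν' x ≤ Iop N s Cs u ν x) :
    IkPlus N 1 s Cs u x = Iop N s Cs u ν x := by
  have hframe : Orthonormal ℝ (fun _ : Fin 1 => ν) := orthonormal_subsingleton_iff.mpr fun _ => hν
  refine IsGreatest.csSup_eq ⟨⟨⟨_, hframe⟩, Fin.sum_univ_one _⟩, ?_⟩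
  rintro _ ⟨ξ, rfl⟩
  dsimp only
  rw [Fin.sum_univ_one]
  exact h _ (orthonormal_subsingleton_iff.mp ξ.2 0)

theorem IkMinus_one_eq_of_forall_le (hν : ‖ν‖ = 1)
    (h : ∀ ν', ‖ν'‖ = 1 → Iop N s Cs u ν x ≤ Iop N s Cs u ν' x) :
    IkMinus N 1 s Cs u x = Iop N s Cs u ν x := by
  have hframe : Orthonormal ℝ (fun _ : Fin 1 => ν) := orthonormal_subsingleton_iff.mpr fun _ => hν
  refine IsLeast.csInf_eq ⟨⟨⟨_, hframe⟩, Fin.sum_univ_one _⟩, ?_⟩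
  rintro _ ⟨ξ, rfl⟩
  dsimp only
  rw [Fin.sum_univ_one]
  exact h _ (orthonormal_subsingleton_iff.mp ξ.2 0)

end operator

theorem stmt_0_general (N : ℕ) (s Cs : ℝ) (hs : s ∈ Ioo (1/2 : ℝ) 1)
    (hCs : 0 < Cs) (g : ℝ → ℝ) (hg : HypH1 s g)
    (u : E N → ℝ) (hu : ∀ x, u x = g ‖x‖)
    (x : E N) (hx : x ≠ 0)
    (ξ xp : E N) (hξ : ‖ξ‖ = 1) (hxp : ‖xp‖ = 1) (hperp : (inner ℝ x xp : ℝ) = 0) :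
    Iop N s Cs u xp x ≤ Iop N s Cs u ξ x ∧
    Iop N s Cs u ξ x ≤ Iop N s Cs u (‖x‖⁻¹ • x) x ∧
    IkPlus N 1 s Cs u x = Iop N s Cs u (‖x‖⁻¹ • x) x ∧
    IkMinus N 1 s Cs u x = Iop N s Cs u xp x := by
  obtain ⟨hg₂, hgw, hmono, -⟩ := hg
  have hmono_inner : ∀ ν ν' : E N, ‖ν‖ = 1 → ‖ν'‖ = 1 → |inner ℝ x ν| ≤ |inner ℝ x ν'| →
      Iop N s Cs u ν x ≤ Iop N s Cs u ν' x := fun _ _ =>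
    Iop_le_Iop_of_abs_inner_le hs hCs.le hg₂ hmono hgw hu hx
  have hunit : ‖‖x‖⁻¹ • x‖ = 1 := norm_smul_inv_norm hx
  have hmin : ∀ ν : E N, ‖ν‖ = 1 → Iop N s Cs u xp x ≤ Iop N s Cs u ν x := fun ν hν =>
    hmono_inner xp ν hxp hν (by simp [hperp])
  have hinner_unit : inner ℝ x (‖x‖⁻¹ • x) = ‖x‖ := by
    rw [real_inner_smul_right, real_inner_self_eq_norm_sq, sq,
      inv_mul_cancel_left₀ (norm_ne_zero_iff.mpr hx)]
  have hmax : ∀ ν : E N, ‖ν‖ = 1 → Iop N s Cs u ν x ≤ Iop N s Cs u (‖x‖⁻¹ • x) x := fun ν hν =>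
    hmono_inner ν _ hν hunit (by simpa [hinner_unit, hν] using abs_real_inner_le_norm x ν)
  exact ⟨hmin ξ hξ, hmax ξ hξ, IkPlus_one_eq_of_forall_le hunit hmax,
    IkMinus_one_eq_of_forall_le hxp hmin⟩

theorem stmt_0 (N : ℕ) (hN : 1 ≤ N) (s Cs : ℝ) (hs : s ∈ Ioo (1/2 : ℝ) 1)
    (hCs : 0 < Cs) (g : ℝ → ℝ) (hg : HypH1 s g)
    (u : E N → ℝ) (hu : ∀ x, u x = g ‖x‖)
    (x : E N) (hx : x ≠ 0)
    (ξ xp : E N) (hξ : ‖ξ‖ = 1) (hxp : ‖xp‖ = 1) (hperp : (inner ℝ x xp : ℝ) = 0) :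
    Iop N s Cs u xp x ≤ Iop N s Cs u ξ x ∧
    Iop N s Cs u ξ x ≤ Iop N s Cs u (‖x‖⁻¹ • x) x ∧
    IkPlus N 1 s Cs u x = Iop N s Cs u (‖x‖⁻¹ • x) x ∧
    IkMinus N 1 s Cs u x = Iop N s Cs u xp x :=
  stmt_0_general N s Cs hs hCs g hg u hu x hx ξ xp hξ hxp hperp
end
end

section
/- Let N ≥ 1, s ∈ (1/2,1), and let u(x) = g(|x|) where g satisfies both radial profile hypotheses (H1) and (H2). Then for every x ≠ 0: (a) if 1 ≤ k < N, then 𝓘_k^- u(x) = k 𝓘_{x^⊥} u(x), where x^⊥ is any unit vector orthogonal to x; (b) 𝓘_N^- u(x) = N 𝓘_{ξ*} u(x), where ξ* ∈ ℝ^N is any unit vector with ⟨x/|x|, ξ*⟩ = 1/√N. In particular the infimum defining 𝓘_N^- u(x) is attained at an orthonormal basis all of whose elements form the same angle with the radial direction. -/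
open MeasureTheory Real Set

noncomputable section

/-- The radial profile hypothesis (H2). -/
def HypH2 (s : ℝ) (g : ℝ → ℝ) : Prop :=
  ContDiffOn ℝ 2 g (Ioi 0) ∧ MemL1w (2*s) 0 g ∧
  (∃ ρ > 0, MemL1w (s - 1/2) ρ (deriv (gtilde g))) ∧
  ConvexOn ℝ (Ioi 0) (deriv (deriv (gtilde g)))

/-!
Write `r = |x|`, `G = g̃`, `A = r² + τ²` and, for a unit vector `ξ`, `p = ⟨x, ξ⟩`. Then
`u(x ± τξ) = G(A ± 2τp)`, so `𝓘_ξ u(x)` depends on `ξ` only through `p ∈ [-r, r]`.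

(a) By (H1) `G` is convex, so `G(A + 2τp) + G(A - 2τp)` grows with `|p|`: every direction does at
least as well as an orthogonal one, and `k < N` orthogonal directions fit into a frame.

(b) By (H2) `b ↦ G'(A + b) - G'(A - b)` is convex and vanishes at `0`, so its slope from `0` is
monotone; this makes `m ↦ G(A + 2τr√m) + G(A - 2τr√m)` convex, and at `m = p² / r²` it is the
symmetric sum above. For an orthonormal basis the numbers `pᵢ² / r²` sum to `1`, so Jensen bounds
the sum over the basis below by `N` times the value at `p² = r² / N`, which an equiangular basis
(the image of the standard one under a reflection) attains.

Comparing the integrals needs the kernels to be integrable: near `τ = 0` by a second order Taylor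
bound, and for large `τ` by the substitution `σ = |x + τξ|` and `g ∈ L¹_{2s}`.
-/

open scoped RealInnerProductSpace

namespace RadialFractional

/-- `u(x + τξ) + u(x - τξ) - 2u(x)` for `u = g(|·|)`, with `G = g̃`, `r = |x|`, `p = ⟨x, ξ⟩`. -/
def radialBracket (G : ℝ → ℝ) (r p τ : ℝ) : ℝ :=
  G (r ^ 2 + τ ^ 2 + 2 * τ * p) + G (r ^ 2 + τ ^ 2 - 2 * τ * p) - 2 * G (r ^ 2)

lemma radialBracket_neg (G : ℝ → ℝ) (r p τ : ℝ) :
    radialBracket G r (-p) τ = radialBracket G r p τ := by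
  simp only [radialBracket, mul_neg, sub_neg_eq_add, ← sub_eq_add_neg]
  ring

lemma radialBracket_abs (G : ℝ → ℝ) (r p τ : ℝ) :
    radialBracket G r |p| τ = radialBracket G r p τ := by
  rcases abs_choice p with h | h <;> rw [h]
  exact radialBracket_neg G r p τ

lemma gtilde_norm_sq {F : Type*} [NormedAddCommGroup F] (g : ℝ → ℝ) (y : F) :
    gtilde g (‖y‖ ^ 2) = g ‖y‖ := by
  simp only [gtilde, Real.sqrt_sq (norm_nonneg y)]

lemma Iop_eq_integral_radialBracket {N : ℕ} (s Cs : ℝ) {g : ℝ → ℝ} {u : E N → ℝ}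
    (hu : ∀ y, u y = g ‖y‖) (x : E N) {ξ : E N} (hξ : ‖ξ‖ = 1) :
    Iop N s Cs u ξ x =
      Cs * ∫ τ in Ioi 0, radialBracket (gtilde g) ‖x‖ ⟪x, ξ⟫ τ * τ ^ (-(1 + 2 * s)) := by
  have hsq : ∀ τ : ℝ, ‖τ • ξ‖ ^ 2 = τ ^ 2 := fun τ => by
    rw [norm_smul, hξ, mul_one, Real.norm_eq_abs, sq_abs]
  simp only [Iop, hu, ← gtilde_norm_sq g, norm_add_sq_real, norm_sub_sq_real, hsq,
    real_inner_smul_right, radialBracket]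
  congr 2 with τ
  ring_nf

lemma Iop_eq_of_inner_eq {N : ℕ} (s Cs : ℝ) {g : ℝ → ℝ} {u : E N → ℝ}
    (hu : ∀ y, u y = g ‖y‖) (x : E N) {ξ η : E N} (hξ : ‖ξ‖ = 1) (hη : ‖η‖ = 1)
    (h : ⟪x, ξ⟫ = ⟪x, η⟫) : Iop N s Cs u ξ x = Iop N s Cs u η x := by
  rw [Iop_eq_integral_radialBracket s Cs hu x hξ, Iop_eq_integral_radialBracket s Cs hu x hη, h]

section Derivatives

variable {G : ℝ → ℝ}

lemma hasDerivAt_of_contDiffOn_Ioi (hG : ContDiffOn ℝ 2 G (Ioi 0)) {t : ℝ} (ht : 0 < t) :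
    HasDerivAt G (deriv G t) t :=
  ((hG.differentiableOn (by norm_num)).differentiableAt (Ioi_mem_nhds ht)).hasDerivAt

lemma contDiffOn_deriv_of_contDiffOn_Ioi (hG : ContDiffOn ℝ 2 G (Ioi 0)) :
    ContDiffOn ℝ 1 (deriv G) (Ioi 0) :=
  hG.deriv_of_isOpen isOpen_Ioi (by norm_num)

lemma hasDerivAt_deriv_of_contDiffOn_Ioi (hG : ContDiffOn ℝ 2 G (Ioi 0)) {t : ℝ}
    (ht : 0 < t) : HasDerivAt (deriv G) (deriv (deriv G) t) t :=
  (((contDiffOn_deriv_of_contDiffOn_Ioi hG).differentiableOn one_ne_zero).differentiableAt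
    (Ioi_mem_nhds ht)).hasDerivAt

lemma continuousOn_deriv_deriv_of_contDiffOn_Ioi (hG : ContDiffOn ℝ 2 G (Ioi 0)) :
    ContinuousOn (deriv (deriv G)) (Ioi 0) :=
  (contDiffOn_deriv_of_contDiffOn_Ioi hG).continuousOn_deriv_of_isOpen isOpen_Ioi le_rfl

end Derivatives

lemma contDiffOn_gtilde {g : ℝ → ℝ} (hg : ContDiffOn ℝ 2 g (Ioi 0)) :
    ContDiffOn ℝ 2 (gtilde g) (Ioi 0) :=
  hg.comp (fun _ hx => (Real.contDiffAt_sqrt (ne_of_gt hx)).contDiffWithinAt)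
    fun _ hx => Real.sqrt_pos.2 hx

lemma _root_.ConvexOn.map_add_add_map_sub_le_s4 {φ : ℝ → ℝ} {S : Set ℝ} (hφ : ConvexOn ℝ S φ)
    {a δ₁ δ₂ : ℝ} (h₀ : 0 ≤ δ₁) (h₁₂ : δ₁ ≤ δ₂) (hp : a + δ₂ ∈ S) (hm : a - δ₂ ∈ S) :
    φ (a + δ₁) + φ (a - δ₁) ≤ φ (a + δ₂) + φ (a - δ₂) := by
  rcases (h₀.trans h₁₂).eq_or_lt with h | hδ₂
  · obtain rfl : δ₁ = 0 := le_antisymm (h₁₂.trans h.ge) h₀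
    rw [← h]
  -- `a ± δ₁` are the convex combinations of `a ± δ₂` with weights `μ, 1 - μ` and `1 - μ, μ`.
  set μ := (δ₂ + δ₁) / (2 * δ₂)
  have hμ₀ : 0 ≤ μ := by positivity
  have hμ₁ : 0 ≤ 1 - μ := by
    rw [sub_nonneg, div_le_one (by positivity)]
    linarith
  have c₁ := hφ.2 hp hm hμ₀ hμ₁ (by ring)
  have c₂ := hφ.2 hp hm hμ₁ hμ₀ (by ring)
  have e₁ : μ • (a + δ₂) + (1 - μ) • (a - δ₂) = a + δ₁ := by
    simp only [μ, smul_eq_mul]; field_simp; ring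
  have e₂ : (1 - μ) • (a + δ₂) + μ • (a - δ₂) = a - δ₁ := by
    simp only [μ, smul_eq_mul]; field_simp; ring
  rw [e₁] at c₁
  rw [e₂] at c₂
  simp only [smul_eq_mul] at c₁ c₂
  linarith

lemma radialBracket_zero_le {G : ℝ → ℝ} (hG : ConvexOn ℝ (Ioi 0) G) {r p τ : ℝ}
    (hτ : 0 ≤ τ) (hτr : τ ≠ r) (hp : |p| ≤ r) :
    radialBracket G r 0 τ ≤ radialBracket G r p τ := by
  have hpos : 0 < (r - τ) ^ 2 := by
    have := sub_ne_zero.2 hτr.symm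
    positivity
  rw [← radialBracket_abs G r p]
  have h := hG.map_add_add_map_sub_le_s4 (a := r ^ 2 + τ ^ 2) le_rfl
    (by positivity : 0 ≤ 2 * τ * |p|) (by simp only [mem_Ioi]; nlinarith [abs_nonneg p])
    (by simp only [mem_Ioi]; nlinarith)
  simp only [radialBracket, mul_zero, add_zero, sub_zero] at h ⊢
  linarith

lemma radialBracket_eq_sqrt (G : ℝ → ℝ) {r : ℝ} (hr : 0 < r) (p τ : ℝ) :
    radialBracket G r p τ = G (r ^ 2 + τ ^ 2 + 2 * τ * r * √(p ^ 2 / r ^ 2)) +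
      G (r ^ 2 + τ ^ 2 - 2 * τ * r * √(p ^ 2 / r ^ 2)) - 2 * G (r ^ 2) := by
  have h : 2 * τ * r * √(p ^ 2 / r ^ 2) = 2 * τ * |p| := by
    rw [Real.sqrt_div' _ (sq_nonneg r), Real.sqrt_sq_eq_abs, Real.sqrt_sq hr.le]
    field_simp
  rw [h, ← radialBracket_abs G r p, radialBracket]

section SecondDerivative

variable {G : ℝ → ℝ}

variable (hG : ContDiffOn ℝ 2 G (Ioi 0)) (hcv : ConvexOn ℝ (Ioi 0) (deriv (deriv G)))
include hG hcv

lemma convexOn_deriv_add_sub_deriv_sub {A B : ℝ} (hBA : B < A) :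
    ConvexOn ℝ (Icc 0 B) (fun b => deriv G (A + b) - deriv G (A - b)) := by
  have hderiv : ∀ b ∈ Icc 0 B, HasDerivAt (fun b => deriv G (A + b) - deriv G (A - b))
      (deriv (deriv G) (A + b) + deriv (deriv G) (A - b)) b := fun b hb => by
    have hplus := (hasDerivAt_deriv_of_contDiffOn_Ioi hG (by linarith [hb.1, hb.2] :
      0 < A + b)).comp_const_add A b
    have hminus := (hasDerivAt_deriv_of_contDiffOn_Ioi hG (by linarith [hb.2] :
      0 < A - b)).comp_const_sub A b
    exact (hplus.sub hminus).congr_deriv (by ring)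
  refine MonotoneOn.convexOn_of_deriv (convex_Icc 0 B)
    (fun b hb => (hderiv b hb).continuousAt.continuousWithinAt) ?_ ?_ <;> rw [interior_Icc]
  · exact fun b hb => (hderiv b (Ioo_subset_Icc_self hb)).differentiableAt.differentiableWithinAt
  · intro b₁ hb₁ b₂ hb₂ h₁₂
    rw [(hderiv b₁ (Ioo_subset_Icc_self hb₁)).deriv, (hderiv b₂ (Ioo_subset_Icc_self hb₂)).deriv]
    exact hcv.map_add_add_map_sub_le_s4 hb₁.1.le h₁₂ (by simp only [mem_Ioi]; linarith [hb₂.1, hb₂.2])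
      (by simp only [mem_Ioi]; linarith [hb₂.2])

lemma monotoneOn_deriv_add_sub_deriv_sub_div {A B : ℝ} (hBA : B < A) :
    MonotoneOn (fun b => (deriv G (A + b) - deriv G (A - b)) / b) (Ioc 0 B) := by
  intro b₁ hb₁ b₂ hb₂ h₁₂
  have h := (convexOn_deriv_add_sub_deriv_sub hG hcv hBA).secant_mono
    (left_mem_Icc.2 (hb₁.1.le.trans hb₁.2)) (Ioc_subset_Icc_self hb₁) (Ioc_subset_Icc_self hb₂)
    hb₁.1.ne' hb₂.1.ne' h₁₂
  simpa using h

lemma convexOn_add_sqrt_add_sub_sqrt {A B : ℝ} (hB : 0 < B) (hBA : B < A) :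
    ConvexOn ℝ (Icc 0 1) (fun m => G (A + B * √m) + G (A - B * √m)) := by
  have hsqrt_le : ∀ m ∈ Icc (0 : ℝ) 1, B * √m ≤ B := fun m hm =>
    mul_le_of_le_one_right hB.le (Real.sqrt_le_one.2 hm.2)
  have hderiv : ∀ m ∈ Ioo (0 : ℝ) 1, HasDerivAt (fun m => G (A + B * √m) + G (A - B * √m))
      ((deriv G (A + B * √m) - deriv G (A - B * √m)) * (B / (2 * √m))) m := fun m hm => by
    have hb := hsqrt_le m (Ioo_subset_Icc_self hm)
    have hb₀ : 0 ≤ B * √m := by positivity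
    have hs := (Real.hasDerivAt_sqrt hm.1.ne').const_mul B
    have hplus := (hasDerivAt_of_contDiffOn_Ioi hG (by linarith : 0 < A + B * √m)).comp m
      (hs.const_add A)
    have hminus := (hasDerivAt_of_contDiffOn_Ioi hG (by linarith : 0 < A - B * √m)).comp m
      (hs.const_sub A)
    exact (hplus.add hminus).congr_deriv (by ring)
  have hcont : ContinuousOn (fun m => G (A + B * √m) + G (A - B * √m)) (Icc 0 1) := by
    have hGc : ContinuousOn G (Ioi 0) := hG.continuousOn
    refine (hGc.comp (by fun_prop) fun m hm => ?_).add (hGc.comp (by fun_prop) fun m hm => ?_)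
    · exact (show 0 < A + B * √m by linarith [mul_nonneg hB.le (Real.sqrt_nonneg m)])
    · exact (show 0 < A - B * √m by linarith [hsqrt_le m hm])
  refine MonotoneOn.convexOn_of_deriv (convex_Icc 0 1) hcont ?_ ?_ <;> rw [interior_Icc]
  · exact fun m hm => (hderiv m hm).differentiableAt.differentiableWithinAt
  · intro m₁ hm₁ m₂ hm₂ h₁₂
    -- In terms of `b = B √m`, the derivative is `B² / 2` times the slope `(G'(A+b) - G'(A-b)) / b`.
    have hslope : ∀ m ∈ Ioo (0 : ℝ) 1,
        deriv (fun m => G (A + B * √m) + G (A - B * √m)) m = B ^ 2 / 2 *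
          ((deriv G (A + B * √m) - deriv G (A - B * √m)) / (B * √m)) := fun m hm => by
      have : √m ≠ 0 := (Real.sqrt_pos.2 hm.1).ne'
      rw [(hderiv m hm).deriv]
      field_simp
    rw [hslope m₁ hm₁, hslope m₂ hm₂]
    gcongr ?_ * ?_
    exact monotoneOn_deriv_add_sub_deriv_sub_div hG hcv hBA
      ⟨by have := Real.sqrt_pos.2 hm₁.1; positivity, hsqrt_le m₁ (Ioo_subset_Icc_self hm₁)⟩
      ⟨by have := Real.sqrt_pos.2 hm₂.1; positivity, hsqrt_le m₂ (Ioo_subset_Icc_self hm₂)⟩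
      (by gcongr)

lemma card_mul_radialBracket_le_sum {N : ℕ} (hN : 0 < N) {r τ q : ℝ} (hr : 0 < r)
    (hτ : 0 < τ) (hτr : τ ≠ r) {p : Fin N → ℝ} (hp : ∑ i, p i ^ 2 = r ^ 2)
    (hq : q ^ 2 = r ^ 2 / N) :
    N * radialBracket G r q τ ≤ ∑ i, radialBracket G r (p i) τ := by
  have hpos : 0 < (r - τ) ^ 2 := by
    have := sub_ne_zero.2 hτr.symm
    positivity
  have hf := convexOn_add_sqrt_add_sub_sqrt hG hcv (A := r ^ 2 + τ ^ 2)
    (by positivity : 0 < 2 * τ * r) (by nlinarith)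
  have hN' : (0 : ℝ) < N := Nat.cast_pos.2 hN
  have hmem : ∀ i ∈ Finset.univ, p i ^ 2 / r ^ 2 ∈ Icc (0 : ℝ) 1 := fun i _ =>
    ⟨by positivity, div_le_one_of_le₀ (hp ▸ Finset.single_le_sum (fun j _ => sq_nonneg (p j))
      (Finset.mem_univ i)) (sq_nonneg r)⟩
  have hmean : ∑ i, (N : ℝ)⁻¹ • (p i ^ 2 / r ^ 2) = q ^ 2 / r ^ 2 := by
    simp only [smul_eq_mul, ← Finset.mul_sum, ← Finset.sum_div, hp, hq]
    field_simp
  have hjensen := hf.map_sum_le (fun _ _ => inv_nonneg.2 hN'.le) (by simp [hN'.ne']) hmem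
  rw [hmean] at hjensen
  simp only [smul_eq_mul, ← Finset.mul_sum] at hjensen
  simp only [radialBracket_eq_sqrt G hr, Finset.sum_sub_distrib, Finset.sum_const,
    Finset.card_univ, Fintype.card_fin, nsmul_eq_mul]
  have := mul_le_mul_of_nonneg_left hjensen hN'.le
  rw [← mul_assoc, mul_inv_cancel₀ hN'.ne', one_mul] at this
  linarith

end SecondDerivative

section ChangeOfVariables

variable {f : ℝ → ℝ}

lemma integrableOn_comp_of_le_abs_deriv {ρ ρ' : ℝ → ℝ} {I : Set ℝ} {c : ℝ}
    (hI : MeasurableSet I) (hρ : ∀ τ ∈ I, HasDerivWithinAt ρ (ρ' τ) I τ) (hinj : InjOn ρ I)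
    (hc : 0 < c) (hρ' : ∀ τ ∈ I, c ≤ |ρ' τ|) (hf : IntegrableOn f (ρ '' I))
    (hmeas : AEStronglyMeasurable (f ∘ ρ) (volume.restrict I)) : IntegrableOn (f ∘ ρ) I := by
  have hjac := (integrableOn_image_iff_integrableOn_abs_deriv_smul hI hρ hinj f).1 hf
  refine Integrable.mono' (hjac.norm.const_mul c⁻¹) hmeas ?_
  filter_upwards [ae_restrict_mem hI] with τ hτ
  simp only [Function.comp_apply, norm_smul, Real.norm_eq_abs, abs_abs]
  rw [← mul_assoc]
  exact le_mul_of_one_le_left (abs_nonneg _) ((one_le_inv_mul₀ hc).2 (hρ' τ hτ))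

variable (hfc : ContinuousOn f (Ioi 0)) (hf : IntegrableOn f (Ioi 0))
include hfc hf

lemma integrableOn_comp_sqrt_sq_add_Ioi {e : ℝ} (he : 0 ≤ e) :
    IntegrableOn (fun τ => f √(τ ^ 2 + e)) (Ioi √e) := by
  have hpos : ∀ τ ∈ Ioi √e, 0 < τ := fun τ hτ => (Real.sqrt_nonneg e).trans_lt hτ
  have hρpos : ∀ τ ∈ Ioi √e, 0 < √(τ ^ 2 + e) := fun τ hτ => by
    have := hpos τ hτ
    positivity
  have hderiv : ∀ τ ∈ Ioi √e, HasDerivWithinAt (fun τ => √(τ ^ 2 + e)) (τ / √(τ ^ 2 + e))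
      (Ioi √e) τ := fun τ hτ => by
    have h := ((hasDerivAt_pow 2 τ).add_const e).sqrt (by have := hpos τ hτ; positivity)
    refine (h.congr_deriv ?_).hasDerivWithinAt
    field_simp
    push_cast
    ring
  have hinj : InjOn (fun τ => √(τ ^ 2 + e)) (Ioi √e) := fun a ha b hb hab => by
    have := congrArg (· ^ 2) hab
    simp only [Real.sq_sqrt (by positivity : 0 ≤ a ^ 2 + e),
      Real.sq_sqrt (by positivity : 0 ≤ b ^ 2 + e), add_left_inj] at this
    exact (pow_left_inj₀ (hpos a ha).le (hpos b hb).le two_ne_zero).1 this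
  -- `√(τ² + e) ≤ τ + √e < 2τ`, so the Jacobian `τ / √(τ² + e)` stays above `1/2`.
  have hjac : ∀ τ ∈ Ioi √e, 1 / 2 ≤ |τ / √(τ ^ 2 + e)| := fun τ hτ => by
    have hτ := hpos τ hτ
    have hle : √(τ ^ 2 + e) ≤ τ + √e := Real.sqrt_le_iff.2 ⟨by positivity, by
      nlinarith [Real.sq_sqrt he, Real.sqrt_nonneg e]⟩
    rw [abs_of_pos (div_pos hτ (hρpos τ ‹_›)), le_div_iff₀ (hρpos τ ‹_›)]
    linarith [show √e < τ from ‹τ ∈ Ioi √e›]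
  refine integrableOn_comp_of_le_abs_deriv measurableSet_Ioi hderiv hinj one_half_pos hjac
    (hf.mono_set ?_) ?_
  · rintro _ ⟨τ, hτ, rfl⟩
    exact hρpos τ hτ
  · exact (hfc.comp (by fun_prop) fun τ hτ => hρpos τ hτ).aestronglyMeasurable measurableSet_Ioi

lemma integrable_comp_sqrt_sq_add {e : ℝ} (he : 0 ≤ e) :
    Integrable (fun τ => f √(τ ^ 2 + e)) := by
  have hright := integrableOn_comp_sqrt_sq_add_Ioi hfc hf he
  have hleft : IntegrableOn (fun τ => f √(τ ^ 2 + e)) (Iio (-√e)) := by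
    have h : IntegrableOn (fun τ => f √(τ ^ 2 + e)) (Ioi (-(-√e))) := by rwa [neg_neg]
    simpa only [neg_sq] using h.comp_neg_Iio
  have hmiddle : IntegrableOn (fun τ => f √(τ ^ 2 + e)) (Icc (-√e) √e) := by
    refine ContinuousOn.integrableOn_Icc ?_
    rcases he.eq_or_lt with rfl | he
    · simp
    · exact hfc.comp (by fun_prop) fun τ _ => show 0 < √(τ ^ 2 + e) by positivity
  rw [← integrableOn_univ, ← Iio_union_Ici (a := -√e),
    ← Icc_union_Ioi_eq_Ici (a := -√e) (b := √e) (by linarith [Real.sqrt_nonneg e]), ← union_assoc]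
  exact (hleft.union hmiddle).union hright

end ChangeOfVariables

section Taylor

variable {G : ℝ → ℝ}

lemma exists_abs_sub_sub_deriv_mul_le_sq (hG : ContDiffOn ℝ 2 G (Ioi 0)) {a b y₀ : ℝ}
    (ha : 0 < a) (hy₀ : y₀ ∈ Icc a b) :
    ∃ M, 0 ≤ M ∧ ∀ y ∈ Icc a b, |G y - G y₀ - deriv G y₀ * (y - y₀)| ≤ M * (y - y₀) ^ 2 := by
  have hJ : Icc a b ⊆ Ioi 0 := fun y hy => ha.trans_le hy.1
  obtain ⟨M, hM⟩ := isCompact_Icc.exists_bound_of_continuousOn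
    ((continuousOn_deriv_deriv_of_contDiffOn_Ioi hG).mono hJ)
  have hG' : ∀ z ∈ Icc a b, ‖deriv G z - deriv G y₀‖ ≤ M * ‖z - y₀‖ := fun z hz =>
    Convex.norm_image_sub_le_of_norm_hasDerivWithin_le
      (fun z hz => (hasDerivAt_deriv_of_contDiffOn_Ioi hG (hJ hz)).hasDerivWithinAt) hM
      (convex_Icc a b) hy₀ hz
  refine ⟨M, (norm_nonneg _).trans (hM y₀ hy₀), fun y hy => ?_⟩
  have hseg : uIcc y₀ y ⊆ Icc a b := ordConnected_Icc.uIcc_subset hy₀ hy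
  -- Mean value inequality for `z ↦ G z - G'(y₀) z`, whose derivative is at most `M |y - y₀|`.
  have h := Convex.norm_image_sub_le_of_norm_hasDerivWithin_le
    (f := fun z => G z - deriv G y₀ * z) (f' := fun z => deriv G z - deriv G y₀)
    (C := M * |y - y₀|) (fun z hz => ?_) (fun z hz => ?_) (convex_uIcc y₀ y) left_mem_uIcc
    right_mem_uIcc
  · simp only [Real.norm_eq_abs] at h
    calc |G y - G y₀ - deriv G y₀ * (y - y₀)|
        = |G y - deriv G y₀ * y - (G y₀ - deriv G y₀ * y₀)| := by ring_nf
      _ ≤ M * |y - y₀| * |y - y₀| := h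
      _ = M * (y - y₀) ^ 2 := by rw [mul_assoc, ← abs_mul, ← sq, abs_sq]
  · exact ((hasDerivAt_of_contDiffOn_Ioi hG (hJ (hseg hz))).sub
      ((hasDerivAt_id z).const_mul _)).hasDerivWithinAt.congr_deriv (by simp)
  · refine (hG' z (hseg hz)).trans ?_
    rw [Real.norm_eq_abs]
    exact mul_le_mul_of_nonneg_left (abs_sub_left_of_mem_uIcc hz)
      ((norm_nonneg _).trans (hM y₀ hy₀))

lemma sq_add_sq_add_mul_mem_Icc {r τ t : ℝ} (hτ : τ ∈ Ioc 0 (r / 2)) (ht : |t| ≤ r) :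
    r ^ 2 + τ ^ 2 + 2 * τ * t ∈ Icc (r ^ 2 / 4) (9 * r ^ 2 / 4) := by
  obtain ⟨ht₁, ht₂⟩ := abs_le.1 ht
  obtain ⟨hτ₀, hτr⟩ := hτ
  constructor
  · nlinarith [mul_nonneg hτ₀.le (by linarith : 0 ≤ t + r)]
  · nlinarith [mul_nonneg hτ₀.le (by linarith : 0 ≤ r - t)]

lemma exists_abs_radialBracket_le_sq (hG : ContDiffOn ℝ 2 G (Ioi 0)) {r p : ℝ} (hr : 0 < r)
    (hp : |p| ≤ r) : ∃ C, ∀ τ ∈ Ioc 0 (r / 2), |radialBracket G r p τ| ≤ C * τ ^ 2 := by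
  obtain ⟨M, hM₀, hM⟩ := exists_abs_sub_sub_deriv_mul_le_sq (a := r ^ 2 / 4) (b := 9 * r ^ 2 / 4)
    (y₀ := r ^ 2) hG (by positivity) ⟨by linarith [sq_nonneg r], by linarith [sq_nonneg r]⟩
  refine ⟨18 * M * r ^ 2 + 2 * |deriv G (r ^ 2)|, fun τ hτ => ?_⟩
  have hrem : ∀ t, |t| ≤ r →
      |G (r ^ 2 + τ ^ 2 + 2 * τ * t) - G (r ^ 2) - deriv G (r ^ 2) * (τ ^ 2 + 2 * τ * t)| ≤
        9 * M * r ^ 2 * τ ^ 2 := fun t ht => by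
    have h := hM _ (sq_add_sq_add_mul_mem_Icc hτ ht)
    obtain ⟨ht₁, ht₂⟩ := abs_le.1 ht
    obtain ⟨hτ₀, hτr⟩ := hτ
    have hsq : (τ ^ 2 + 2 * τ * t) ^ 2 ≤ 9 * r ^ 2 * τ ^ 2 := by
      nlinarith [mul_nonneg (mul_nonneg (sq_nonneg τ) (by linarith : 0 ≤ 3 * r - τ - 2 * t))
        (by linarith : 0 ≤ 3 * r + τ + 2 * t)]
    rw [show r ^ 2 + τ ^ 2 + 2 * τ * t - r ^ 2 = τ ^ 2 + 2 * τ * t by ring] at h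
    nlinarith
  have hsplit : radialBracket G r p τ =
      (G (r ^ 2 + τ ^ 2 + 2 * τ * p) - G (r ^ 2) - deriv G (r ^ 2) * (τ ^ 2 + 2 * τ * p)) +
      (G (r ^ 2 + τ ^ 2 + 2 * τ * -p) - G (r ^ 2) - deriv G (r ^ 2) * (τ ^ 2 + 2 * τ * -p)) +
      deriv G (r ^ 2) * (2 * τ ^ 2) := by
    simp only [radialBracket, mul_neg, ← sub_eq_add_neg]
    ring
  rw [hsplit]
  refine (abs_add_three _ _ _).trans ?_
  rw [abs_mul, abs_of_nonneg (by positivity : 0 ≤ 2 * τ ^ 2)]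
  linarith [hrem p hp, hrem (-p) (by rwa [abs_neg])]

lemma continuousOn_radialBracket_Ioc (hG : ContinuousOn G (Ioi 0)) {r p : ℝ} (hr : 0 < r)
    (hp : |p| ≤ r) : ContinuousOn (radialBracket G r p) (Ioc 0 (r / 2)) := by
  have hJ : ∀ t, |t| ≤ r → MapsTo (fun τ => r ^ 2 + τ ^ 2 + 2 * τ * t) (Ioc 0 (r / 2)) (Ioi 0) :=
    fun t ht τ hτ => (by positivity : 0 < r ^ 2 / 4).trans_le (sq_add_sq_add_mul_mem_Icc hτ ht).1
  have hminus := hG.comp (by fun_prop) (hJ (-p) (by rwa [abs_neg]))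
  simp only [mul_neg, ← sub_eq_add_neg] at hminus
  exact ((hG.comp (by fun_prop) (hJ p hp)).add hminus).sub continuousOn_const

lemma integrableOn_radialBracket_mul_rpow_Ioc (hG : ContDiffOn ℝ 2 G (Ioi 0)) {s : ℝ}
    (hs : s < 1) {r p : ℝ} (hr : 0 < r) (hp : |p| ≤ r) :
    IntegrableOn (fun τ => radialBracket G r p τ * τ ^ (-(1 + 2 * s))) (Ioc 0 (r / 2)) := by
  obtain ⟨C, hC⟩ := exists_abs_radialBracket_le_sq hG hr hp
  have hpow : IntegrableOn (fun τ : ℝ => τ ^ (1 - 2 * s)) (Ioo 0 (r / 2)) :=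
    (intervalIntegral.integrableOn_Ioo_rpow_iff (by positivity)).2 (by linarith)
  have hmaj : IntegrableOn (fun τ : ℝ => C * τ ^ (1 - 2 * s)) (Ioc 0 (r / 2)) :=
    IntegrableOn.congr_set_ae (hpow.const_mul C) Ioo_ae_eq_Ioc.symm
  refine hmaj.mono' (((continuousOn_radialBracket_Ioc hG.continuousOn hr hp).mul
    (continuousOn_id.rpow_const fun τ hτ => Or.inl hτ.1.ne')).aestronglyMeasurable
      measurableSet_Ioc) ?_
  filter_upwards [ae_restrict_mem measurableSet_Ioc] with τ hτ
  rw [norm_mul, Real.norm_eq_abs, Real.norm_of_nonneg (Real.rpow_nonneg hτ.1.le _)]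
  calc |radialBracket G r p τ| * τ ^ (-(1 + 2 * s)) ≤ C * τ ^ 2 * τ ^ (-(1 + 2 * s)) :=
        mul_le_mul_of_nonneg_right (hC τ hτ) (Real.rpow_nonneg hτ.1.le _)
    _ = C * τ ^ (1 - 2 * s) := by
        rw [mul_assoc, ← Real.rpow_natCast, ← Real.rpow_add hτ.1]
        congr 2
        push_cast
        ring

end Taylor

lemma integrableOn_gtilde_mul_rpow_Ioi {g : ℝ → ℝ} (hgc : ContinuousOn g (Ioi 0)) {c : ℝ}
    (hc : 0 < c) (hg : IntegrableOn (fun σ => g σ / (1 + σ ^ c)) (Ioi 0)) {r q : ℝ}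
    (hr : 0 < r) (hq : |q| ≤ r) :
    IntegrableOn (fun τ => gtilde g (r ^ 2 + τ ^ 2 + 2 * τ * q) * τ ^ (-c)) (Ioi (r / 2)) := by
  set ρ : ℝ → ℝ := fun τ => √(r ^ 2 + τ ^ 2 + 2 * τ * q)
  have hweighted : Integrable (fun τ => g (ρ τ) / (1 + ρ τ ^ c)) := by
    have hfc : ContinuousOn (fun σ => g σ / (1 + σ ^ c)) (Ioi 0) :=
      hgc.div (continuous_const.add (Real.continuous_rpow_const hc.le)).continuousOn
        fun σ hσ => by have : (0 : ℝ) < σ := hσ; positivity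
    have hq' : 0 ≤ r ^ 2 - q ^ 2 := by nlinarith [sq_abs q, abs_nonneg q]
    convert (integrable_comp_sqrt_sq_add hfc hg hq').comp_sub_right (-q) using 4 with τ <;>
      simp only [ρ] <;> ring_nf
  -- `ρ τ ≤ 3 τ` on `τ > r / 2`, which bounds the weight `(1 + ρ^c) τ^(-c)`.
  have hweight : ∀ τ ∈ Ioi (r / 2), (1 + ρ τ ^ c) * τ ^ (-c) ≤ (r / 2) ^ (-c) + 3 ^ c := by
    intro τ hτ
    have hτ₀ : 0 < τ := by linarith [mem_Ioi.1 hτ]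
    have hρ : ρ τ ≤ 3 * τ := Real.sqrt_le_iff.2 ⟨by positivity, by
      nlinarith [(abs_le.1 hq).2, mem_Ioi.1 hτ]⟩
    have hinv : τ ^ c * τ ^ (-c) = 1 := by rw [← Real.rpow_add hτ₀, add_neg_cancel, Real.rpow_zero]
    calc (1 + ρ τ ^ c) * τ ^ (-c) ≤ τ ^ (-c) + (3 * τ) ^ c * τ ^ (-c) := by
          rw [add_mul, one_mul]
          exact add_le_add le_rfl (mul_le_mul_of_nonneg_right
            (Real.rpow_le_rpow (Real.sqrt_nonneg _) hρ hc.le) (Real.rpow_nonneg hτ₀.le _))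
      _ = τ ^ (-c) + 3 ^ c := by rw [Real.mul_rpow (by norm_num) hτ₀.le, mul_assoc, hinv, mul_one]
      _ ≤ (r / 2) ^ (-c) + 3 ^ c := add_le_add
          (Real.rpow_le_rpow_of_nonpos (by positivity) (mem_Ioi.1 hτ).le (by linarith)) le_rfl
  have hcont : ContinuousOn (fun τ => (1 + ρ τ ^ c) * τ ^ (-c)) (Ioi (r / 2)) :=
    (continuous_const.add ((Real.continuous_rpow_const hc.le).comp
      (Real.continuous_sqrt.comp (by fun_prop)))).continuousOn.mul
      (continuousOn_id.rpow_const fun τ hτ =>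
        Or.inl (show (0 : ℝ) < τ by linarith [mem_Ioi.1 hτ]).ne')
  refine IntegrableOn.congr_fun
    (hweighted.integrableOn.mul_bdd (c := (r / 2) ^ (-c) + 3 ^ c)
      (hcont.aestronglyMeasurable measurableSet_Ioi) ?_)
    (fun τ hτ => ?_) measurableSet_Ioi
  · filter_upwards [ae_restrict_mem measurableSet_Ioi] with τ hτ
    have : 0 < τ := by linarith [mem_Ioi.1 hτ]
    rw [Real.norm_of_nonneg (by positivity)]
    exact hweight τ hτ
  · have : 0 < 1 + ρ τ ^ c := by positivity
    change g (ρ τ) / (1 + ρ τ ^ c) * ((1 + ρ τ ^ c) * τ ^ (-c)) = g (ρ τ) * τ ^ (-c)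
    field_simp

lemma integrableOn_radialBracket_mul_rpow {g : ℝ → ℝ} (hg : ContDiffOn ℝ 2 g (Ioi 0)) {s : ℝ}
    (hs₀ : 0 < s) (hs₁ : s < 1) (hgL : MemL1w (2 * s) 0 g) {r p : ℝ} (hr : 0 < r)
    (hp : |p| ≤ r) :
    IntegrableOn (fun τ => radialBracket (gtilde g) r p τ * τ ^ (-(1 + 2 * s))) (Ioi 0) := by
  have hc : 0 < 1 + 2 * s := by linarith
  have hplus := integrableOn_gtilde_mul_rpow_Ioi hg.continuousOn hc hgL hr hp
  have hminus := integrableOn_gtilde_mul_rpow_Ioi hg.continuousOn hc hgL hr (q := -p)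
    (by rwa [abs_neg])
  have hconst : IntegrableOn (fun τ : ℝ => 2 * gtilde g (r ^ 2) * τ ^ (-(1 + 2 * s)))
      (Ioi (r / 2)) := (integrableOn_Ioi_rpow_of_lt (by linarith) (by positivity)).const_mul _
  have htail : IntegrableOn (fun τ => radialBracket (gtilde g) r p τ * τ ^ (-(1 + 2 * s)))
      (Ioi (r / 2)) := by
    refine IntegrableOn.congr_fun ((hplus.add hminus).sub hconst) (fun τ _ => ?_)
      measurableSet_Ioi
    simp only [Pi.add_apply, Pi.sub_apply, radialBracket, mul_neg, ← sub_eq_add_neg]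
    ring
  rw [← Ioc_union_Ioi_eq_Ioi (half_pos hr).le]
  exact (integrableOn_radialBracket_mul_rpow_Ioc (contDiffOn_gtilde hg) hs₁ hr hp).union htail

section Comparison

variable {N : ℕ} {s Cs : ℝ} {g : ℝ → ℝ} {u : E N → ℝ}

lemma Iop_le_of_inner_eq_zero (hs₀ : 0 < s) (hs₁ : s < 1) (hCs : 0 ≤ Cs)
    (hg : ContDiffOn ℝ 2 g (Ioi 0)) (hgL : MemL1w (2 * s) 0 g)
    (hmono : MonotoneOn (deriv (gtilde g)) (Ioi 0)) (hu : ∀ y, u y = g ‖y‖) {x : E N}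
    (hx : x ≠ 0) {xp ξ : E N} (hxp : ‖xp‖ = 1) (hxpx : ⟪x, xp⟫ = 0) (hξ : ‖ξ‖ = 1) :
    Iop N s Cs u xp x ≤ Iop N s Cs u ξ x := by
  have hr : 0 < ‖x‖ := norm_pos_iff.2 hx
  have hp : |⟪x, ξ⟫| ≤ ‖x‖ := (abs_real_inner_le_norm x ξ).trans_eq (by rw [hξ, mul_one])
  have hconv : ConvexOn ℝ (Ioi 0) (gtilde g) := by
    have h := contDiffOn_gtilde hg
    refine MonotoneOn.convexOn_of_deriv (convex_Ioi 0) h.continuousOn ?_ ?_ <;> rw [interior_Ioi]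
    exacts [h.differentiableOn (by norm_num), hmono]
  rw [Iop_eq_integral_radialBracket s Cs hu x hxp, Iop_eq_integral_radialBracket s Cs hu x hξ, hxpx]
  refine mul_le_mul_of_nonneg_left (integral_mono_ae
    (integrableOn_radialBracket_mul_rpow hg hs₀ hs₁ hgL hr (by rw [abs_zero]; exact hr.le))
    (integrableOn_radialBracket_mul_rpow hg hs₀ hs₁ hgL hr hp) ?_) hCs
  filter_upwards [ae_restrict_mem measurableSet_Ioi,
    ae_restrict_of_ae (compl_mem_ae_iff.2 (measure_singleton ‖x‖))] with τ hτ hτr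
  exact mul_le_mul_of_nonneg_right (radialBracket_zero_le hconv (le_of_lt hτ) hτr hp)
    (Real.rpow_nonneg (le_of_lt hτ) _)

lemma _root_.Orthonormal.sum_inner_sq {ι F : Type*} [Fintype ι] [NormedAddCommGroup F]
    [InnerProductSpace ℝ F] [FiniteDimensional ℝ F] {ξ : ι → F} (hξ : Orthonormal ℝ ξ)
    (hcard : Fintype.card ι = Module.finrank ℝ F) (x : F) : ∑ i, ⟪x, ξ i⟫ ^ 2 = ‖x‖ ^ 2 := by
  have hspan := (hξ.linearIndependent.span_eq_top_of_card_eq_finrank' hcard).ge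
  simpa using (OrthonormalBasis.mk hξ hspan).sum_sq_inner_left x

lemma card_mul_Iop_le_sum (hN : 0 < N) (hs₀ : 0 < s) (hs₁ : s < 1) (hCs : 0 ≤ Cs)
    (hg : ContDiffOn ℝ 2 g (Ioi 0)) (hgL : MemL1w (2 * s) 0 g)
    (hcv : ConvexOn ℝ (Ioi 0) (deriv (deriv (gtilde g)))) (hu : ∀ y, u y = g ‖y‖) {x : E N}
    (hx : x ≠ 0) {ξs : E N} (hξs : ‖ξs‖ = 1) (hξsx : ⟪x, ξs⟫ = ‖x‖ / √N) {ξ : Fin N → E N}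
    (hξ : Orthonormal ℝ ξ) : N * Iop N s Cs u ξs x ≤ ∑ i, Iop N s Cs u (ξ i) x := by
  have hr : 0 < ‖x‖ := norm_pos_iff.2 hx
  have hp : ∀ i, |⟪x, ξ i⟫| ≤ ‖x‖ := fun i =>
    (abs_real_inner_le_norm x (ξ i)).trans_eq (by rw [hξ.1 i, mul_one])
  have hq : |⟪x, ξs⟫| ≤ ‖x‖ := (abs_real_inner_le_norm x ξs).trans_eq (by rw [hξs, mul_one])
  have hparseval := hξ.sum_inner_sq (by simp) x
  have hq2 : ⟪x, ξs⟫ ^ 2 = ‖x‖ ^ 2 / N := by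
    rw [hξsx, div_pow, Real.sq_sqrt (Nat.cast_nonneg N)]
  have hint := fun p (hp : |p| ≤ ‖x‖) =>
    integrableOn_radialBracket_mul_rpow hg hs₀ hs₁ hgL hr hp
  simp only [Iop_eq_integral_radialBracket s Cs hu x (hξ.1 _),
    Iop_eq_integral_radialBracket s Cs hu x hξs, ← Finset.mul_sum]
  rw [mul_left_comm, ← integral_const_mul, ← integral_finsetSum _ fun i _ => hint _ (hp i)]
  refine mul_le_mul_of_nonneg_left (integral_mono_ae ((hint _ hq).const_mul _)
    (integrable_finsetSum _ fun i _ => hint _ (hp i)) ?_) hCs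
  filter_upwards [ae_restrict_mem measurableSet_Ioi,
    ae_restrict_of_ae (compl_mem_ae_iff.2 (measure_singleton ‖x‖))] with τ hτ hτr
  rw [← mul_assoc, ← Finset.sum_mul]
  exact mul_le_mul_of_nonneg_right
    (card_mul_radialBracket_le_sum (contDiffOn_gtilde hg) hcv hN hr hτ hτr hparseval hq2)
    (Real.rpow_nonneg (le_of_lt hτ) _)

end Comparison

lemma exists_orthonormal_inner_eq {ι F : Type*} [Fintype ι] [NormedAddCommGroup F]
    [InnerProductSpace ℝ F] (b : OrthonormalBasis ι ℝ F) {v w : F} (h : ‖w‖ = ‖v‖) :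
    ∃ η : ι → F, Orthonormal ℝ η ∧ ∀ i, ⟪v, η i⟫ = ⟪w, b i⟫ := by
  set R := Submodule.reflection (ℝ ∙ (w - v))ᗮ
  refine ⟨fun i => R (b i), b.orthonormal.comp_linearIsometryEquiv R, fun i => ?_⟩
  rw [← Submodule.reflection_sub h, LinearIsometryEquiv.inner_map_map]

lemma exists_orthonormal_inner_eq_zero {N k : ℕ} (hkN : k < N) (x : E N) :
    ∃ ξ : Fin k → E N, Orthonormal ℝ ξ ∧ ∀ j, ⟪x, ξ j⟫ = 0 := by
  obtain ⟨η, hη, hηx⟩ := exists_orthonormal_inner_eq (EuclideanSpace.basisFun (Fin N) ℝ)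
    (v := x) (w := EuclideanSpace.single ⟨0, by omega⟩ ‖x‖) (by simp)
  refine ⟨fun j => η (Fin.castLE hkN j.succ),
    hη.comp _ ((Fin.castLE_injective _).comp (Fin.succ_injective _)), fun j => ?_⟩
  simp [hηx, EuclideanSpace.inner_single_right, Fin.ext_iff]

lemma exists_orthonormal_inner_eq_norm_div_sqrt {N : ℕ} (hN : 0 < N) (x : E N) :
    ∃ η : Fin N → E N, Orthonormal ℝ η ∧ ∀ i, ⟪x, η i⟫ = ‖x‖ / √N := by
  have hN' : (0 : ℝ) < N := by exact_mod_cast hN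
  have hw : ‖(WithLp.toLp 2 fun _ : Fin N => ‖x‖ / √N : E N)‖ = ‖x‖ := by
    rw [EuclideanSpace.norm_eq]
    simp only [Real.norm_eq_abs, sq_abs, div_pow, Real.sq_sqrt hN'.le, Finset.sum_const,
      Finset.card_univ, Fintype.card_fin, nsmul_eq_mul]
    rw [mul_div_cancel₀ _ hN'.ne', Real.sqrt_sq (norm_nonneg x)]
  obtain ⟨η, hη, hηx⟩ := exists_orthonormal_inner_eq (EuclideanSpace.basisFun (Fin N) ℝ) hw
  exact ⟨η, hη, fun i => by simp [hηx, EuclideanSpace.inner_single_right]⟩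

lemma IkMinus_eq_of_le_of_eq {N k : ℕ} {s Cs : ℝ} {u : E N → ℝ} {x : E N} {c : ℝ}
    (hle : ∀ ξ : Fin k → E N, Orthonormal ℝ ξ → c ≤ ∑ i, Iop N s Cs u (ξ i) x)
    {ξ₀ : Fin k → E N} (hξ₀ : Orthonormal ℝ ξ₀) (heq : ∑ i, Iop N s Cs u (ξ₀ i) x = c) :
    IkMinus N k s Cs u x = c := by
  have : Nonempty {ξ : Fin k → E N // Orthonormal ℝ ξ} := ⟨⟨ξ₀, hξ₀⟩⟩
  have hbdd : BddBelow (range fun ξ : {ξ : Fin k → E N // Orthonormal ℝ ξ} =>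
      ∑ i, Iop N s Cs u (ξ.1 i) x) := ⟨c, by rintro _ ⟨ξ, rfl⟩; exact hle ξ.1 ξ.2⟩
  exact le_antisymm ((ciInf_le hbdd ⟨ξ₀, hξ₀⟩).trans_eq heq) (le_ciInf fun ξ => hle ξ.1 ξ.2)

end RadialFractional

open RadialFractional in
theorem stmt_4 (N : ℕ) (hN : 1 ≤ N)
    (s Cs : ℝ) (hs : s ∈ Ioo (1/2 : ℝ) 1) (hCs : 0 < Cs)
    (g : ℝ → ℝ) (hg1 : HypH1 s g) (hg2 : HypH2 s g)
    (u : E N → ℝ) (hu : ∀ x, u x = g ‖x‖)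
    (x : E N) (hx : x ≠ 0) :
    (∀ k : ℕ, 1 ≤ k → k < N → ∀ xp : E N, ‖xp‖ = 1 → (inner ℝ x xp : ℝ) = 0 →
      IkMinus N k s Cs u x = (k : ℝ) * Iop N s Cs u xp x) ∧
    (∀ ξstar : E N, ‖ξstar‖ = 1 →
      (inner ℝ (‖x‖⁻¹ • x) ξstar : ℝ) = 1 / Real.sqrt N →
      IkMinus N N s Cs u x = (N : ℝ) * Iop N s Cs u ξstar x) := by
  obtain ⟨hg, hgL, hmono, -⟩ := hg1
  obtain ⟨-, -, -, hcv⟩ := hg2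
  have hs₀ : 0 < s := by linarith [hs.1]
  refine ⟨fun k _ hkN xp hxp hxpx => ?_, fun ξs hξs hξsx => ?_⟩
  · obtain ⟨ξ, hξ, hξx⟩ := exists_orthonormal_inner_eq_zero hkN x
    refine IkMinus_eq_of_le_of_eq (fun ζ hζ => ?_) hξ ?_
    · calc (k : ℝ) * Iop N s Cs u xp x = ∑ _j : Fin k, Iop N s Cs u xp x := by simp
        _ ≤ ∑ j, Iop N s Cs u (ζ j) x := Finset.sum_le_sum fun j _ =>
          Iop_le_of_inner_eq_zero hs₀ hs.2 hCs.le hg hgL hmono hu hx hxp hxpx (hζ.1 j)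
    · simp [Iop_eq_of_inner_eq s Cs hu x (hξ.1 _) hxp ((hξx _).trans hxpx.symm)]
  · have hξsx' : ⟪x, ξs⟫ = ‖x‖ / √N := by
      rw [real_inner_smul_left, inv_mul_eq_iff_eq_mul₀ (norm_ne_zero_iff.2 hx)] at hξsx
      rw [hξsx, mul_one_div]
    obtain ⟨η, hη, hηx⟩ := exists_orthonormal_inner_eq_norm_div_sqrt hN x
    refine IkMinus_eq_of_le_of_eq
      (fun ζ hζ => card_mul_Iop_le_sum hN hs₀ hs.2 hCs.le hg hgL hcv hu hx hξs hξsx' hζ) hη ?_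
    simp [Iop_eq_of_inner_eq s Cs hu x (hη.1 _) hξs ((hηx _).trans hξsx'.symm)]
end
end

section
/- Let N ≥ 1, s ∈ (1/2,1), γ ∈ (0,2s), and let v(x) = |x|^γ on ℝ^N. Then there exists a constant c_γ ∈ ℝ such that 𝓘_{x̂} v(x) = c_γ |x|^{γ−2s} for all x ≠ 0, where x̂ = x/|x|; explicitly c_γ = C_s ∫₀^∞ [ |1+τ|^γ + |1−τ|^γ − 2 ] τ^{−(1+2s)} dτ. Moreover c_γ < 0 if γ ∈ (0, 2s−1), c_γ = 0 if γ = 2s−1, and c_γ > 0 if γ ∈ (2s−1, 1). -/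
open MeasureTheory Real Set

noncomputable section

/-!
Writing `x = r • x̂` with `r = ‖x‖`, the substitution `τ = r t` gives
`𝓘_x̂ ‖·‖^γ (x) = c_γ r^(γ-2s)`, so what remains is the sign of
`I(s) = ∫₀^∞ (|1+τ|^γ + |1-τ|^γ - 2) τ^(-1-2s) dτ` for `γ < 1`.
The substitution `τ ↦ 1/τ` folds `(1, ∞)` onto `(0, 1)`; the folded integrand is strictly
decreasing in `s` at every point, because `(1+σ)^γ + (1-σ)^γ < 2` by strict concavity of `t ↦ t^γ`.
At `s = (γ+1)/2` the folded integrand has an elementary primitive vanishing at both ends of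
`(0, 1)`, so `I((γ+1)/2) = 0` and `I(s)` has the sign of `(γ+1)/2 - s`, that is, of `γ - (2s-1)`.
-/

open Filter Topology

lemma abs_one_add_rpow_sub_one_sub_rpow_le {q x : ℝ} (hq₀ : -1 ≤ q) (hq₁ : q ≤ 1)
    (hx₀ : 0 ≤ x) (hx : x ≤ 1 / 2) : |(1 + x) ^ q - (1 - x) ^ q| ≤ 4 * x := by
  have hsub : 0 < 1 - x := by linarith
  have hadd : 1 ≤ 1 + x := by linarith
  have upper_add : (1 + x) ^ q ≤ 1 + x := by
    simpa using rpow_le_rpow_of_exponent_le hadd hq₁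
  have lower_sub : 1 - x ≤ (1 - x) ^ q := by
    simpa using rpow_le_rpow_of_exponent_ge hsub (by linarith) hq₁
  have upper_sub : (1 - x) ^ q ≤ (1 - x)⁻¹ := by
    simpa [rpow_neg_one] using rpow_le_rpow_of_exponent_ge hsub (by linarith) hq₀
  have lower_add : (1 + x)⁻¹ ≤ (1 + x) ^ q := by
    simpa [rpow_neg_one] using rpow_le_rpow_of_exponent_le hadd hq₀
  have inv_sub : (1 - x)⁻¹ ≤ 1 + 2 * x := by
    rw [inv_le_iff_one_le_mul₀ hsub]; nlinarith
  have inv_add : 1 - x ≤ (1 + x)⁻¹ := by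
    rw [← one_div, le_div_iff₀ (by linarith)]; nlinarith
  rw [abs_le]; constructor <;> linarith

lemma abs_one_add_rpow_add_one_sub_rpow_sub_two_le {p x : ℝ} (hp₀ : 0 ≤ p) (hp₂ : p ≤ 2)
    (hx₀ : 0 ≤ x) (hx : x ≤ 1 / 2) : |(1 + x) ^ p + (1 - x) ^ p - 2| ≤ 4 * x ^ 2 := by
  have hderiv : ∀ y ∈ Icc (0 : ℝ) (1 / 2), HasDerivAt (fun y => (1 + y) ^ p + (1 - y) ^ p - 2)
      (p * ((1 + y) ^ (p - 1) - (1 - y) ^ (p - 1))) y := by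
    rintro y ⟨hy₀, hy⟩
    have hadd := ((hasDerivAt_id' y).const_add 1).rpow_const (p := p) (Or.inl (by linarith))
    have hsub := ((hasDerivAt_id' y).const_sub 1).rpow_const (p := p) (Or.inl (by linarith))
    exact ((hadd.add hsub).sub_const 2).congr_deriv (by ring)
  refine image_norm_le_of_norm_deriv_right_le_deriv_boundary (a := 0) (b := 1 / 2)
    (B := fun y => 4 * y ^ 2) (B' := fun y => 8 * y)
    (fun y hy => (hderiv y hy).continuousAt.continuousWithinAt)
    (fun y hy => (hderiv y (Ico_subset_Icc_self hy)).hasDerivWithinAt) (by norm_num)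
    (fun y => ((hasDerivAt_pow 2 y).const_mul 4).congr_deriv (by ring)) ?_ ⟨hx₀, hx⟩
  rintro y ⟨hy₀, hy⟩
  rw [norm_mul, Real.norm_eq_abs, Real.norm_eq_abs, abs_of_nonneg hp₀]
  have := abs_one_add_rpow_sub_one_sub_rpow_le (q := p - 1) (by linarith) (by linarith) hy₀ hy.le
  nlinarith [abs_nonneg ((1 + y) ^ (p - 1) - (1 - y) ^ (p - 1))]

lemma one_add_rpow_add_one_sub_rpow_lt_two {γ σ : ℝ} (hγ₀ : 0 < γ) (hγ₁ : γ < 1)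
    (hσ₀ : 0 < σ) (hσ₁ : σ ≤ 1) : (1 + σ) ^ γ + (1 - σ) ^ γ < 2 := by
  have := (strictConcaveOn_rpow hγ₀ hγ₁).2 (x := 1 + σ) (y := 1 - σ)
    (by simp only [mem_Ici]; linarith) (by simp only [mem_Ici]; linarith) (by linarith)
    one_half_pos one_half_pos (by norm_num)
  simp only [smul_eq_mul, show (1 / 2 : ℝ) * (1 + σ) + 1 / 2 * (1 - σ) = 1 by ring,
    one_rpow] at this
  linarith

def fracIntegrand (γ s τ : ℝ) : ℝ :=
  (|1 + τ| ^ γ + |1 - τ| ^ γ - 2) * τ ^ (-(1 + 2 * s))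

-- the contribution of `(1, ∞)` to `∫ fracIntegrand`, moved to `(0, 1)` by `τ = 1 / σ`
def foldedTail (γ s σ : ℝ) : ℝ :=
  ((1 + σ) ^ γ + (1 - σ) ^ γ - 2 * σ ^ γ) * σ ^ (2 * s - 1 - γ)

def foldedIntegrand (γ s σ : ℝ) : ℝ :=
  fracIntegrand γ s σ + foldedTail γ s σ

lemma continuousOn_fracIntegrand {γ : ℝ} (hγ : 0 ≤ γ) (s : ℝ) :
    ContinuousOn (fracIntegrand γ s) (Ioi 0) := by
  refine ContinuousOn.mul (Continuous.continuousOn ?_)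
    (continuousOn_id.rpow_const fun τ hτ => Or.inl (ne_of_gt hτ))
  fun_prop (disch := exact Or.inr hγ)

lemma abs_fracIntegrand_le {γ σ : ℝ} (s : ℝ) (hγ₀ : 0 ≤ γ) (hγ₂ : γ ≤ 2) (hσ₀ : 0 < σ)
    (hσ : σ ≤ 1 / 2) : |fracIntegrand γ s σ| ≤ 4 * σ ^ (1 - 2 * s) := by
  have hpow : 0 < σ ^ (-(1 + 2 * s)) := rpow_pos_of_pos hσ₀ _
  rw [fracIntegrand, abs_mul, abs_of_pos hpow, abs_of_pos (by linarith : 0 < 1 + σ),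
    abs_of_pos (by linarith : 0 < 1 - σ)]
  calc _ ≤ 4 * σ ^ 2 * σ ^ (-(1 + 2 * s)) := by
        gcongr; exact abs_one_add_rpow_add_one_sub_rpow_sub_two_le hγ₀ hγ₂ hσ₀.le hσ
    _ = 4 * σ ^ (1 - 2 * s) := by
        rw [mul_assoc, ← rpow_natCast, ← rpow_add hσ₀]; norm_num; ring_nf

lemma tendsto_fracIntegrand_nhdsGT_zero {γ s : ℝ} (hγ₀ : 0 ≤ γ) (hγ₂ : γ ≤ 2) (hs : s < 1 / 2) :
    Tendsto (fracIntegrand γ s) (𝓝[>] 0) (𝓝 0) := by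
  have hlim : Tendsto (fun σ : ℝ => 4 * σ ^ (1 - 2 * s)) (𝓝[>] 0) (𝓝 0) := by
    simpa [zero_rpow (by linarith : 1 - 2 * s ≠ 0)] using
      ((continuousAt_rpow_const 0 (1 - 2 * s) (Or.inr (by linarith))).tendsto.const_mul 4).mono_left
        nhdsWithin_le_nhds
  refine squeeze_zero_norm' ?_ hlim
  filter_upwards [Ioo_mem_nhdsGT (by norm_num : (0 : ℝ) < 1 / 2)] with σ hσ
  exact abs_fracIntegrand_le s hγ₀ hγ₂ hσ.1 hσ.2.le

lemma integrableOn_fracIntegrand_Ioc {γ s : ℝ} (hγ₀ : 0 ≤ γ) (hγ₂ : γ ≤ 2) (hs : s < 1) :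
    IntegrableOn (fracIntegrand γ s) (Ioc 0 1) := by
  have hcont := continuousOn_fracIntegrand hγ₀ s
  have near_zero : IntegrableOn (fracIntegrand γ s) (Ioc 0 (1 / 2)) := by
    refine Integrable.mono' ((intervalIntegral.intervalIntegrable_rpow'
      (r := 1 - 2 * s) (by linarith)).1.const_mul 4)
      ((hcont.mono Ioc_subset_Ioi_self).aestronglyMeasurable measurableSet_Ioc) ?_
    filter_upwards [ae_restrict_mem measurableSet_Ioc] with σ hσ
    exact abs_fracIntegrand_le s hγ₀ hγ₂ hσ.1 hσ.2
  have away : IntegrableOn (fracIntegrand γ s) (Icc (1 / 2) 1) :=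
    (hcont.mono fun σ hσ => lt_of_lt_of_le (by norm_num) hσ.1).integrableOn_Icc
  refine (near_zero.union away).mono_set fun σ hσ => ?_
  rcases le_or_gt σ (1 / 2) with h | h
  exacts [Or.inl ⟨hσ.1, h⟩, Or.inr ⟨h.le, hσ.2⟩]

lemma integrableOn_foldedTail {γ s : ℝ} (hγ₀ : 0 ≤ γ) (hγs : γ < 2 * s) :
    IntegrableOn (foldedTail γ s) (Ioo 0 1) := by
  have hpow : IntegrableOn (fun σ : ℝ => σ ^ (2 * s - 1 - γ)) (Ioo 0 1) :=
    (intervalIntegrable_iff_integrableOn_Ioo_of_le zero_le_one).1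
      (intervalIntegral.intervalIntegrable_rpow' (by linarith))
  refine hpow.continuousOn_mul_of_subset (K := Icc 0 1) ?_ isCompact_Icc measurableSet_Ioo
    Ioo_subset_Icc_self
  exact Continuous.continuousOn (by fun_prop (disch := exact Or.inr hγ₀))

lemma image_inv_Ioo_zero_one : Inv.inv '' Ioo (0 : ℝ) 1 = Ioi 1 := by
  rw [image_inv_eq_inv, inv_Ioo_0_left one_pos, inv_one]

lemma hasDerivWithinAt_inv_Ioo_zero_one :
    ∀ σ ∈ Ioo (0 : ℝ) 1, HasDerivWithinAt Inv.inv (-(σ ^ 2)⁻¹) (Ioo 0 1) σ :=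
  fun _ hσ => (hasDerivAt_inv hσ.1.ne').hasDerivWithinAt

lemma integrableOn_Ioi_one_iff_comp_inv (g : ℝ → ℝ) :
    IntegrableOn g (Ioi 1) ↔ IntegrableOn (fun σ => (σ ^ 2)⁻¹ * g σ⁻¹) (Ioo 0 1) := by
  rw [← image_inv_Ioo_zero_one, integrableOn_image_iff_integrableOn_abs_deriv_smul
    measurableSet_Ioo hasDerivWithinAt_inv_Ioo_zero_one inv_injective.injOn]
  simp only [abs_neg, abs_inv, abs_pow, smul_eq_mul, sq_abs]

lemma integral_Ioi_one_eq_integral_comp_inv (g : ℝ → ℝ) :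
    ∫ τ in Ioi 1, g τ = ∫ σ in Ioo 0 1, (σ ^ 2)⁻¹ * g σ⁻¹ := by
  rw [← image_inv_Ioo_zero_one, integral_image_eq_integral_abs_deriv_smul
    measurableSet_Ioo hasDerivWithinAt_inv_Ioo_zero_one inv_injective.injOn]
  simp only [abs_neg, abs_inv, abs_pow, smul_eq_mul, sq_abs]

lemma inv_sq_mul_fracIntegrand_inv {γ s σ : ℝ} (hσ₀ : 0 < σ) (hσ₁ : σ ≤ 1) :
    (σ ^ 2)⁻¹ * fracIntegrand γ s σ⁻¹ = foldedTail γ s σ := by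
  have habs_add : |1 + σ⁻¹| = (1 + σ) / σ := by
    rw [abs_of_pos (by positivity)]; field_simp; ring
  have habs_sub : |1 - σ⁻¹| = (1 - σ) / σ := by
    rw [abs_sub_comm, abs_of_nonneg (by rw [sub_nonneg]; exact one_le_inv_iff₀.2 ⟨hσ₀, hσ₁⟩)]
    field_simp
  have hexp : σ ^ (2 * s - 1 - γ) = (σ ^ 2)⁻¹ * σ ^ (1 + 2 * s) * (σ ^ γ)⁻¹ := by
    rw [← rpow_natCast, ← rpow_neg hσ₀.le, ← rpow_neg hσ₀.le, ← rpow_add hσ₀, ← rpow_add hσ₀]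
    congr 1; push_cast; ring
  rw [fracIntegrand, foldedTail, habs_add, habs_sub, div_rpow (by linarith) hσ₀.le,
    div_rpow (by linarith) hσ₀.le, inv_rpow hσ₀.le, rpow_neg hσ₀.le, inv_inv, hexp]
  field_simp

lemma integrableOn_fracIntegrand_Ioi_one {γ s : ℝ} (hγ₀ : 0 ≤ γ) (hγs : γ < 2 * s) :
    IntegrableOn (fracIntegrand γ s) (Ioi 1) :=
  (integrableOn_Ioi_one_iff_comp_inv _).2 <| (integrableOn_foldedTail hγ₀ hγs).congr_fun
    (fun _ hσ => (inv_sq_mul_fracIntegrand_inv hσ.1 hσ.2.le).symm) measurableSet_Ioo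

lemma intervalIntegrable_foldedIntegrand {γ s : ℝ} (hγ₀ : 0 ≤ γ) (hγs : γ < 2 * s)
    (hs : s < 1) : IntervalIntegrable (foldedIntegrand γ s) volume 0 1 := by
  rw [intervalIntegrable_iff_integrableOn_Ioo_of_le zero_le_one]
  exact ((integrableOn_fracIntegrand_Ioc hγ₀ (by linarith) hs).mono_set Ioo_subset_Ioc_self).add
    (integrableOn_foldedTail hγ₀ hγs)

lemma integral_fracIntegrand_eq_integral_foldedIntegrand {γ s : ℝ} (hγ₀ : 0 ≤ γ)
    (hγs : γ < 2 * s) (hs : s < 1) :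
    ∫ τ in Ioi 0, fracIntegrand γ s τ = ∫ σ in (0 : ℝ)..1, foldedIntegrand γ s σ := by
  have hinv : ∫ τ in Ioi 1, fracIntegrand γ s τ = ∫ σ in Ioc 0 1, foldedTail γ s σ := by
    rw [integral_Ioi_one_eq_integral_comp_inv, integral_Ioc_eq_integral_Ioo]
    exact setIntegral_congr_fun measurableSet_Ioo
      fun σ hσ => inv_sq_mul_fracIntegrand_inv hσ.1 hσ.2.le
  rw [← Ioc_union_Ioi_eq_Ioi zero_le_one, setIntegral_union Ioc_disjoint_Ioi_same
    measurableSet_Ioi (integrableOn_fracIntegrand_Ioc hγ₀ (by linarith) hs)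
    (integrableOn_fracIntegrand_Ioi_one hγ₀ hγs), hinv, intervalIntegral.integral_of_le zero_le_one,
    ← integral_add (integrableOn_fracIntegrand_Ioc hγ₀ (by linarith) hs)]
  · rfl
  · exact (integrableOn_Ioc_iff_integrableOn_Ioo enorm_ne_top).2 (integrableOn_foldedTail hγ₀ hγs)

lemma foldedIntegrand_lt_of_lt {γ s₁ s₂ σ : ℝ} (hγ₀ : 0 < γ) (hγ₁ : γ < 1) (hγs : γ < 2 * s₁)
    (hs : s₁ < s₂) (hσ₀ : 0 < σ) (hσ₁ : σ < 1) :
    foldedIntegrand γ s₂ σ < foldedIntegrand γ s₁ σ := by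
  have hconcave := one_add_rpow_add_one_sub_rpow_lt_two hγ₀ hγ₁ hσ₀ hσ₁.le
  have hσγ : σ ^ γ < 1 := rpow_lt_one hσ₀.le hσ₁ hγ₀
  have hu : σ ^ (-(1 + 2 * s₁)) < σ ^ (-(1 + 2 * s₂)) :=
    rpow_lt_rpow_of_exponent_gt hσ₀ hσ₁ (by linarith)
  set c := σ ^ (2 * s₁ + 2 * s₂ - γ)
  have hc₀ : 0 < c := rpow_pos_of_pos hσ₀ _
  have hc₁ : c < 1 := rpow_lt_one hσ₀.le hσ₁ (by linarith)
  -- the difference of the two sides is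
  -- `(σ^(-(1+2s₂)) - σ^(-(1+2s₁))) * ((1-c) * ((1+σ)^γ + (1-σ)^γ - 2) + c * (2σ^γ - 2))`
  have hw : σ ^ (2 * s₂ - 1 - γ) = σ ^ (2 * s₁ - 1 - γ)
      - c * (σ ^ (-(1 + 2 * s₂)) - σ ^ (-(1 + 2 * s₁))) := by
    rw [mul_sub, ← rpow_add hσ₀, ← rpow_add hσ₀]
    ring_nf
  simp only [foldedIntegrand, fracIntegrand, foldedTail, abs_of_pos (by linarith : 0 < 1 + σ),
    abs_of_pos (by linarith : 0 < 1 - σ), hw]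
  nlinarith [mul_pos (sub_pos.2 hu)
      (mul_pos (sub_pos.2 hc₁) (by linarith : 0 < 2 - ((1 + σ) ^ γ + (1 - σ) ^ γ))),
    mul_pos (sub_pos.2 hu) (mul_pos hc₀ (by linarith : 0 < 2 - 2 * σ ^ γ))]

lemma strictAntiOn_integral_fracIntegrand {γ : ℝ} (hγ₀ : 0 < γ) (hγ₁ : γ < 1) :
    StrictAntiOn (fun s => ∫ τ in Ioi 0, fracIntegrand γ s τ) (Ioo (γ / 2) 1) := by
  rintro s₁ ⟨hγs₁, hs₁⟩ s₂ ⟨hγs₂, hs₂⟩ hs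
  have hint₁ := intervalIntegrable_foldedIntegrand hγ₀.le (by linarith) hs₁
  have hint₂ := intervalIntegrable_foldedIntegrand hγ₀.le (by linarith) hs₂
  simp only
  rw [integral_fracIntegrand_eq_integral_foldedIntegrand hγ₀.le (by linarith) hs₁,
    integral_fracIntegrand_eq_integral_foldedIntegrand hγ₀.le (by linarith) hs₂, ← sub_pos,
    ← intervalIntegral.integral_sub hint₁ hint₂]
  exact intervalIntegral.intervalIntegral_pos_of_pos_on (hint₁.sub hint₂)
    (fun σ hσ => sub_pos.2 (foldedIntegrand_lt_of_lt hγ₀ hγ₁ (by linarith) hs hσ.1 hσ.2)) one_pos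

def foldedPrimitive (γ σ : ℝ) : ℝ :=
  ((1 + σ) ^ (γ + 1) - (1 - σ) ^ (γ + 1) - 2 * σ ^ (γ + 1)
    - ((1 + σ) ^ (γ + 1) + (1 - σ) ^ (γ + 1) - 2) * σ ^ (-(1 + γ))) / (γ + 1)

lemma hasDerivAt_foldedPrimitive {γ σ : ℝ} (hγ : 0 < γ) (hσ₀ : 0 < σ) (hσ₁ : σ < 1) :
    HasDerivAt (foldedPrimitive γ) (foldedIntegrand γ ((γ + 1) / 2) σ) σ := by
  have hadd := ((hasDerivAt_id' σ).const_add 1).rpow_const (p := γ + 1) (Or.inl (by linarith))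
  have hsub := ((hasDerivAt_id' σ).const_sub 1).rpow_const (p := γ + 1) (Or.inl (by linarith))
  have hid := hasDerivAt_rpow_const (x := σ) (p := γ + 1) (Or.inl hσ₀.ne')
  have hneg := hasDerivAt_rpow_const (x := σ) (p := -(1 + γ)) (Or.inl hσ₀.ne')
  refine ((((hadd.sub hsub).sub (hid.const_mul 2)).sub
    (((hadd.add hsub).sub_const 2).mul hneg)).div_const (γ + 1)).congr_deriv ?_
  have hpow : ∀ {b : ℝ}, 0 < b → b ^ (γ + 1) = b ^ γ * b := fun hb => rpow_add_one hb.ne' γ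
  have hexp : σ ^ (-(1 + γ)) = σ ^ (-(1 + 2 * ((γ + 1) / 2))) * σ := by
    rw [← rpow_add_one hσ₀.ne']; ring_nf
  simp only [foldedIntegrand, fracIntegrand, foldedTail, Pi.add_apply,
    abs_of_pos (by linarith : 0 < 1 + σ), abs_of_pos (by linarith : 0 < 1 - σ),
    add_sub_cancel_right, show -(1 + γ) - 1 = -(1 + 2 * ((γ + 1) / 2)) by ring,
    show 2 * ((γ + 1) / 2) - 1 - γ = 0 by ring, rpow_zero, hpow (by linarith : 0 < 1 + σ),
    hpow (by linarith : 0 < 1 - σ), hexp]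
  field_simp
  ring

lemma foldedPrimitive_one {γ : ℝ} (hγ : 0 < γ) : foldedPrimitive γ 1 = 0 := by
  simp [foldedPrimitive, zero_rpow (by linarith : γ + 1 ≠ 0)]

lemma tendsto_foldedPrimitive_nhdsGT_zero {γ : ℝ} (hγ₀ : 0 < γ) (hγ₁ : γ < 1) :
    Tendsto (foldedPrimitive γ) (𝓝[>] 0) (𝓝 0) := by
  have hfrac : Tendsto (fun σ : ℝ => ((1 + σ) ^ (γ + 1) + (1 - σ) ^ (γ + 1) - 2) * σ ^ (-(1 + γ)))
      (𝓝[>] 0) (𝓝 0) := by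
    refine (tendsto_fracIntegrand_nhdsGT_zero (γ := γ + 1) (s := γ / 2) (by linarith)
      (by linarith) (by linarith)).congr' ?_
    filter_upwards [Ioo_mem_nhdsGT (zero_lt_one' ℝ)] with σ hσ
    rw [fracIntegrand, abs_of_pos (by linarith [hσ.1] : 0 < 1 + σ),
      abs_of_pos (by linarith [hσ.2] : 0 < 1 - σ), show 1 + 2 * (γ / 2) = 1 + γ by ring]
  have hcont : Continuous fun σ : ℝ => (1 + σ) ^ (γ + 1) - (1 - σ) ^ (γ + 1) - 2 * σ ^ (γ + 1) := by
    fun_prop (disch := linarith)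
  have hrest : Tendsto (fun σ : ℝ => (1 + σ) ^ (γ + 1) - (1 - σ) ^ (γ + 1) - 2 * σ ^ (γ + 1))
      (𝓝[>] 0) (𝓝 0) := by
    simpa [zero_rpow (by linarith : γ + 1 ≠ 0)] using (hcont.tendsto 0).mono_left nhdsWithin_le_nhds
  have := (hrest.sub hfrac).div_const (γ + 1)
  rwa [sub_self, zero_div] at this

lemma integral_fracIntegrand_eq_zero {γ : ℝ} (hγ₀ : 0 < γ) (hγ₁ : γ < 1) :
    ∫ τ in Ioi 0, fracIntegrand γ ((γ + 1) / 2) τ = 0 := by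
  have hcont : ContinuousAt (foldedPrimitive γ) 1 := by
    unfold foldedPrimitive
    fun_prop (disch := first | linarith | exact Or.inr (by linarith) | exact Or.inl one_ne_zero)
  rw [integral_fracIntegrand_eq_integral_foldedIntegrand hγ₀.le (by linarith) (by linarith),
    intervalIntegral.integral_eq_sub_of_hasDerivAt_of_tendsto one_pos
      (fun σ hσ => hasDerivAt_foldedPrimitive hγ₀ hσ.1 hσ.2)
      (intervalIntegrable_foldedIntegrand hγ₀.le (by linarith) (by linarith))
      (tendsto_foldedPrimitive_nhdsGT_zero hγ₀ hγ₁) (hcont.tendsto.mono_left nhdsWithin_le_nhds),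
    foldedPrimitive_one hγ₀, sub_zero]

lemma Iop_norm_rpow {N : ℕ} (s Cs γ : ℝ) {x : E N} (hx : x ≠ 0) :
    Iop N s Cs (fun y => ‖y‖ ^ γ) (‖x‖⁻¹ • x) x
      = (Cs * ∫ τ in Ioi 0, fracIntegrand γ s τ) * ‖x‖ ^ (γ - 2 * s) := by
  set r := ‖x‖
  have hr : 0 < r := norm_pos_iff.2 hx
  have hscale : ∀ τ ∈ Ioi (0 : ℝ),
      (‖x + τ • r⁻¹ • x‖ ^ γ + ‖x - τ • r⁻¹ • x‖ ^ γ - 2 * r ^ γ) * τ ^ (-(1 + 2 * s))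
        = r ^ (γ - 2 * s - 1) * fracIntegrand γ s (r⁻¹ * τ) := by
    intro τ hτ
    have hpow : τ ^ (-(1 + 2 * s)) = r ^ (-(1 + 2 * s)) * (r⁻¹ * τ) ^ (-(1 + 2 * s)) := by
      rw [← mul_rpow hr.le (mul_pos (inv_pos.2 hr) hτ).le, ← mul_assoc, mul_inv_cancel₀ hr.ne',
        one_mul]
    have hadd : x + τ • r⁻¹ • x = (1 + r⁻¹ * τ) • x := by
      rw [smul_smul, add_smul, one_smul, mul_comm]
    have hsub : x - τ • r⁻¹ • x = (1 - r⁻¹ * τ) • x := by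
      rw [smul_smul, sub_smul, one_smul, mul_comm]
    rw [hadd, hsub, norm_smul, norm_smul, Real.norm_eq_abs, Real.norm_eq_abs,
      mul_rpow (abs_nonneg _) hr.le, mul_rpow (abs_nonneg _) hr.le, hpow, fracIntegrand,
      show γ - 2 * s - 1 = γ + -(1 + 2 * s) by ring, rpow_add hr]
    ring
  rw [Iop, setIntegral_congr_fun measurableSet_Ioi hscale, integral_const_mul,
    integral_comp_mul_left_Ioi (fracIntegrand γ s) 0 (inv_pos.2 hr), mul_zero, inv_inv,
    smul_eq_mul]
  have hr1 : r ^ (γ - 2 * s) = r ^ (γ - 2 * s - 1) * r := by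
    rw [← rpow_add_one hr.ne', sub_add_cancel]
  rw [hr1]
  ring

theorem stmt_5_general (N : ℕ)
    (s Cs : ℝ) (hs : s ∈ Ioo (1/2 : ℝ) 1) (hCs : 0 < Cs)
    (γ : ℝ) (hγ : γ ∈ Ioo (0:ℝ) (2*s))
    (v : E N → ℝ) (hv : ∀ x, v x = ‖x‖ ^ γ)
    (cγ : ℝ)
    (hcγ : cγ = Cs * ∫ τ in Ioi (0:ℝ),
        (|1 + τ| ^ γ + |1 - τ| ^ γ - 2) * τ ^ (-(1 + 2*s))) :
    (∀ x : E N, x ≠ 0 → Iop N s Cs v (‖x‖⁻¹ • x) x = cγ * ‖x‖ ^ (γ - 2*s)) ∧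
    (γ ∈ Ioo (0:ℝ) (2*s - 1) → cγ < 0) ∧
    (γ = 2*s - 1 → cγ = 0) ∧
    (γ ∈ Ioo (2*s - 1) 1 → 0 < cγ) := by
  obtain ⟨-, hs₂⟩ := hs
  obtain ⟨hγ₀, hγs⟩ := hγ
  obtain rfl : v = fun y => ‖y‖ ^ γ := funext hv
  change cγ = Cs * ∫ τ in Ioi 0, fracIntegrand γ s τ at hcγ
  subst hcγ
  refine ⟨fun x hx => Iop_norm_rpow s Cs γ hx, ?_, ?_, ?_⟩
  · rintro ⟨-, hγs'⟩
    have hγ₁ : γ < 1 := by linarith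
    have hneg : ∫ τ in Ioi 0, fracIntegrand γ s τ < 0 := by
      simpa only [integral_fracIntegrand_eq_zero hγ₀ hγ₁] using
        strictAntiOn_integral_fracIntegrand hγ₀ hγ₁ ⟨by linarith, by linarith⟩
          ⟨by linarith, hs₂⟩ (by linarith : (γ + 1) / 2 < s)
    exact mul_neg_of_pos_of_neg hCs hneg
  · intro hγs'
    obtain rfl : s = (γ + 1) / 2 := by linarith
    rw [integral_fracIntegrand_eq_zero hγ₀ (by linarith), mul_zero]
  · rintro ⟨hγs', hγ₁⟩
    have hpos : 0 < ∫ τ in Ioi 0, fracIntegrand γ s τ := by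
      simpa only [integral_fracIntegrand_eq_zero hγ₀ hγ₁] using
        strictAntiOn_integral_fracIntegrand hγ₀ hγ₁ ⟨by linarith, hs₂⟩
          ⟨by linarith, by linarith⟩ (by linarith : s < (γ + 1) / 2)
    exact mul_pos hCs hpos

theorem stmt_5 (N : ℕ) (hN : 1 ≤ N)
    (s Cs : ℝ) (hs : s ∈ Ioo (1/2 : ℝ) 1) (hCs : 0 < Cs)
    (γ : ℝ) (hγ : γ ∈ Ioo (0:ℝ) (2*s))
    (v : E N → ℝ) (hv : ∀ x, v x = ‖x‖ ^ γ)
    (cγ : ℝ)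
    (hcγ : cγ = Cs * ∫ τ in Ioi (0:ℝ),
        (|1 + τ| ^ γ + |1 - τ| ^ γ - 2) * τ ^ (-(1 + 2*s))) :
    (∀ x : E N, x ≠ 0 → Iop N s Cs v (‖x‖⁻¹ • x) x = cγ * ‖x‖ ^ (γ - 2*s)) ∧
    (γ ∈ Ioo (0:ℝ) (2*s - 1) → cγ < 0) ∧
    (γ = 2*s - 1 → cγ = 0) ∧
    (γ ∈ Ioo (2*s - 1) 1 → 0 < cγ) :=
  stmt_5_general N s Cs hs hCs γ hγ v hv cγ hcγ
end
end

section
/- Let N ≥ 2, s ∈ (1/2,1), and 1 ≤ k < N. Then there exists a nonconstant, smooth, bounded function u : ℝ^N → ℝ which attains its global minimum at some point of ℝ^N and satisfies 𝓘_k^- u(x) ≤ 0 for every x ∈ ℝ^N (classically). In fact, if φ : ℝ → ℝ is any nonconstant smooth bounded function attaining its minimum, then u(x) := φ(x_N) has these properties. -/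
open MeasureTheory Real Set

noncomputable section

theorem stmt_9 (N k : ℕ) (hN : 2 ≤ N) (hk1 : 1 ≤ k) (hkN : k < N)
    (s Cs : ℝ) (hs : s ∈ Ioo (1/2 : ℝ) 1) (hCs : 0 < Cs)
    (φ : ℝ → ℝ) (hφsmooth : ContDiff ℝ (⊤ : ℕ∞) φ)
    (hφbdd : ∃ M : ℝ, ∀ t, |φ t| ≤ M)
    (hφnc : ∃ a b : ℝ, φ a ≠ φ b)
    (hφmin : ∃ t₀ : ℝ, ∀ t, φ t₀ ≤ φ t)
    (u : E N → ℝ) (hu : ∀ x : E N, u x = φ (x ⟨N - 1, by omega⟩)) :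
    (∃ x y : E N, u x ≠ u y) ∧
    ContDiff ℝ (⊤ : ℕ∞) u ∧
    (∃ M : ℝ, ∀ x, |u x| ≤ M) ∧
    (∃ x₀ : E N, ∀ x, u x₀ ≤ u x) ∧
    (∀ x : E N, IkMinus N k s Cs u x ≤ 0) := by
  obtain ⟨M, hM⟩ := hφbdd
  obtain ⟨a, b, hab⟩ := hφnc
  obtain ⟨t₀, ht₀⟩ := hφmin
  have hidx : N - 1 < N := by omega
  set idx : Fin N := ⟨N - 1, hidx⟩ with hidxdef
  have hu' : ∀ x : E N, u x = φ (x idx) := hu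
  refine ⟨⟨EuclideanSpace.single idx a, EuclideanSpace.single idx b, ?_⟩, ?_, ⟨M, fun x => ?_⟩,
    ⟨EuclideanSpace.single idx t₀, fun x => ?_⟩, ?_⟩
  · rw [hu', hu']
    simpa [EuclideanSpace.single_apply] using hab
  · have : u = φ ∘ ⇑(EuclideanSpace.proj idx) := funext fun x => by
      rw [hu']; rfl
    rw [this]
    exact hφsmooth.comp (ContinuousLinearMap.contDiff (𝕜 := ℝ) (EuclideanSpace.proj idx : E N →L[ℝ] ℝ))
  · rw [hu']; exact hM _
  · rw [hu', hu']
    simpa [EuclideanSpace.single_apply] using ht₀ (x idx)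
  · intro x
    set ξ : Fin k → E N := fun i => EuclideanSpace.single (Fin.castLE hkN.le i) (1:ℝ) with hξ
    have horth : Orthonormal ℝ ξ := by
      have h := (EuclideanSpace.basisFun (Fin N) ℝ).orthonormal.comp
        (Fin.castLE hkN.le) (Fin.castLE_injective _)
      have hξeq : ξ = ⇑(EuclideanSpace.basisFun (Fin N) ℝ) ∘ Fin.castLE hkN.le := by
        funext i
        simp [ξ, EuclideanSpace.basisFun_apply]
      rw [hξeq]; exact h
    have key : ∀ i : Fin k, Iop N s Cs u (ξ i) x = 0 := by
      intro i
      have hne : (Fin.castLE hkN.le i : Fin N) ≠ idx := by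
        intro h
        have h2 : (i : ℕ) = N - 1 := by
          simpa [Fin.ext_iff, hidxdef] using h
        have := i.isLt; omega
      have hzero : ∀ τ : ℝ, u (x + τ • ξ i) + u (x - τ • ξ i) - 2 * u x = 0 := by
        intro τ
        rw [hu', hu', hu']
        have h1 : (x + τ • ξ i) idx = x idx := by
          simp [ξ, EuclideanSpace.single_apply, Ne.symm hne]
        have h2 : (x - τ • ξ i) idx = x idx := by
          simp [ξ, EuclideanSpace.single_apply, Ne.symm hne]
        rw [h1, h2]; ring
      have hfun : ∀ τ ∈ Ioi (0:ℝ),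
          (u (x + τ • ξ i) + u (x - τ • ξ i) - 2 * u x) * τ ^ (-(1 + 2*s)) = 0 :=
        fun τ _ => by rw [hzero τ, zero_mul]
      rw [Iop, setIntegral_congr_fun measurableSet_Ioi hfun]
      simp
    set F : {v : Fin k → E N // Orthonormal ℝ v} → ℝ :=
      fun v => ∑ i, Iop N s Cs u (v.1 i) x with hF
    have hF0 : F ⟨ξ, horth⟩ = 0 := by
      simp [hF, key]
    rw [IkMinus]
    by_cases hbdd : BddBelow (Set.range F)
    · exact le_trans (ciInf_le hbdd ⟨ξ, horth⟩) (le_of_eq hF0)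
    · rw [Real.iInf_of_not_bddBelow hbdd]
end
end

section
/- Let N ≥ 1 and s ∈ (1/2,1). If u ∈ C(ℝ^N) ∩ L¹_{2s}(ℝ^N) is a viscosity supersolution of 𝓘_N^- u = 0 in ℝ^N (i.e. 𝓘_N^- u ≤ 0 in the viscosity sense) and u attains its global minimum at some point x₀ ∈ ℝ^N, then u is constant. -/
open MeasureTheory Real Set

noncomputable section

/-- `u ∈ L¹_{2s}(ℝ^N)`. -/
def MemL1s (N : ℕ) (s : ℝ) (u : E N → ℝ) : Prop :=
  ∀ x ξ : E N, ‖ξ‖ = 1 →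
    IntegrableOn (fun τ => (|u (x + τ • ξ)| + |u (x - τ • ξ)|) / (1 + τ ^ (1 + 2*s)))
      (Ioi (0:ℝ))

/-- Evaluation of `𝓘_ξ` at `x` with a test function `φ` near `x` (within distance `δ`)
and `u` itself far away. -/
noncomputable def ItestEval (N : ℕ) (s Cs δ : ℝ) (u φ : E N → ℝ) (ξ x : E N) : ℝ :=
  Cs * ∫ τ in Ioo (0:ℝ) δ, (φ (x + τ • ξ) + φ (x - τ • ξ) - 2 * φ x) * τ ^ (-(1 + 2*s)) +
  Cs * ∫ τ in Ioi δ, (u (x + τ • ξ) + u (x - τ • ξ) - 2 * u x) * τ ^ (-(1 + 2*s))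

/-- `u` is a viscosity supersolution of `𝓘_k^- u + f(u) = 0` in `ℝ^N`. -/
def IsSupersolMinus (N k : ℕ) (s Cs : ℝ) (f : ℝ → ℝ) (u : E N → ℝ) : Prop :=
  ∀ x₀ : E N, ∀ δ > (0:ℝ), ∀ φ : E N → ℝ,
    ContDiffOn ℝ 2 φ (Metric.ball x₀ δ) →
    (∀ y ∈ Metric.ball x₀ δ, u x₀ - φ x₀ ≤ u y - φ y) →
    (⨅ ξ : {ξ : Fin k → E N // Orthonormal ℝ ξ},
        ∑ i, ItestEval N s Cs δ u φ (ξ.1 i) x₀) + f (u x₀) ≤ 0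

/-- `u` is a viscosity supersolution of `𝓘_k^+ u + f(u) = 0` in `ℝ^N`. -/
def IsSupersolPlus (N k : ℕ) (s Cs : ℝ) (f : ℝ → ℝ) (u : E N → ℝ) : Prop :=
  ∀ x₀ : E N, ∀ δ > (0:ℝ), ∀ φ : E N → ℝ,
    ContDiffOn ℝ 2 φ (Metric.ball x₀ δ) →
    (∀ y ∈ Metric.ball x₀ δ, u x₀ - φ x₀ ≤ u y - φ y) →
    (⨆ ξ : {ξ : Fin k → E N // Orthonormal ℝ ξ},
        ∑ i, ItestEval N s Cs δ u φ (ξ.1 i) x₀) + f (u x₀) ≤ 0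

/-!
If `u` is not constant, pick `z` off the set where `u` attains its minimum and a point `a` of that
set nearest to `z`, at distance `d`. Testing the supersolution property at `a` with the constant
`u a` leaves only the tails `∫_{τ>δ} (u(a+τξ)+u(a-τξ)-2u(a)) τ^{-1-2s}`, which are nonnegative, so
the infimum over orthonormal frames of their sum would have to be `≤ 0`. But every orthonormal
frame contains a `ξ_i` with `|⟪z - a, ξ_i⟫| ≥ d/N`, and for `τ` between half of that inner product
and all of it one of `a ± τ ξ_i` lies in a fixed closed ball around `z` of radius `< d`, where `u`
exceeds its minimum by a fixed `η > 0`. This bounds the tail sum from below uniformly in the frame.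
-/

open scoped InnerProductSpace

theorem Orthonormal.exists_sq_norm_le_card_mul_inner_sq {ι F : Type*} [Fintype ι] [Nonempty ι]
    [NormedAddCommGroup F] [InnerProductSpace ℝ F] {ξ : ι → F} (hξ : Orthonormal ℝ ξ)
    (hcard : Fintype.card ι = Module.finrank ℝ F) (v : F) :
    ∃ i, ‖v‖ ^ 2 ≤ Fintype.card ι * ⟪ξ i, v⟫_ℝ ^ 2 := by
  let b := OrthonormalBasis.mk hξ (hξ.linearIndependent.span_eq_top_of_card_eq_finrank hcard).ge
  have hparseval : ∑ i, ⟪ξ i, v⟫_ℝ ^ 2 = ‖v‖ ^ 2 := by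
    simpa [b] using b.sum_sq_inner_right v
  obtain ⟨i, -, hi⟩ := Finset.exists_le_of_sum_le (f := fun _ ↦ ‖v‖ ^ 2 / Fintype.card ι)
    (g := fun i ↦ ⟪ξ i, v⟫_ℝ ^ 2) Finset.univ_nonempty
    (by rw [Finset.sum_const, Finset.card_univ, nsmul_eq_mul, mul_div_cancel₀ _ (by positivity),
      hparseval])
  exact ⟨i, (div_le_iff₀' (by positivity)).1 hi⟩

theorem norm_sub_smul_sq_le_or_norm_add_smul_sq_le {F : Type*} [NormedAddCommGroup F]
    [InnerProductSpace ℝ F] {v e : F} (he : ‖e‖ = 1) {τ : ℝ} (hτ₁ : |⟪v, e⟫_ℝ| ≤ 2 * τ)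
    (hτ₂ : τ ≤ |⟪v, e⟫_ℝ|) :
    ‖v - τ • e‖ ^ 2 ≤ ‖v‖ ^ 2 - ⟪v, e⟫_ℝ ^ 2 / 2 ∨ ‖v + τ • e‖ ^ 2 ≤ ‖v‖ ^ 2 - ⟪v, e⟫_ℝ ^ 2 / 2 := by
  have hτ : 0 ≤ τ := by linarith [abs_nonneg ⟪v, e⟫_ℝ]
  rw [norm_sub_sq_real, norm_add_sq_real, real_inner_smul_right, norm_smul, Real.norm_eq_abs, he,
    abs_of_nonneg hτ]
  rcases le_total 0 ⟪v, e⟫_ℝ with h | h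
  · rw [abs_of_nonneg h] at hτ₁ hτ₂
    left; nlinarith
  · rw [abs_of_nonpos h] at hτ₁ hτ₂
    right; nlinarith

theorem mul_sub_le_setIntegral_Ioi {f : ℝ → ℝ} {δ α β c : ℝ} (hf : IntegrableOn f (Ioi δ))
    (hf₀ : ∀ τ ∈ Ioi δ, 0 ≤ f τ) (hδα : δ < α) (hαβ : α ≤ β) (hc : ∀ τ ∈ Icc α β, c ≤ f τ) :
    c * (β - α) ≤ ∫ τ in Ioi δ, f τ := by
  have hsub : Icc α β ⊆ Ioi δ := fun τ hτ ↦ hδα.trans_le hτ.1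
  calc c * (β - α) = volume.real (Icc α β) • c := by
        rw [Real.volume_real_Icc_of_le hαβ, smul_eq_mul, mul_comm]
    _ ≤ ∫ τ in Icc α β, f τ :=
        setIntegral_ge_of_const_le measurableSet_Icc measure_Icc_lt_top.ne hc (hf.mono_set hsub)
    _ ≤ ∫ τ in Ioi δ, f τ :=
        setIntegral_mono_set hf ((ae_restrict_iff' measurableSet_Ioi).2 (ae_of_all _ hf₀))
          hsub.eventuallyLE

theorem exists_minimizer_nearest {X : Type*} [MetricSpace X] [ProperSpace X] {u : X → ℝ}
    (hu : Continuous u) {x₀ z : X} (hmin : ∀ x, u x₀ ≤ u x) (hz : u z ≠ u x₀) :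
    ∃ a, (∀ x, u a ≤ u x) ∧ z ≠ a ∧ ∀ y, dist z y < dist z a → u a < u y := by
  have hA : IsClosed (u ⁻¹' {u x₀}) := isClosed_singleton.preimage hu
  obtain ⟨a, ha, hza⟩ := hA.exists_infDist_eq_dist ⟨x₀, rfl⟩ z
  rw [mem_preimage, mem_singleton_iff] at ha
  refine ⟨a, ha ▸ hmin, fun h ↦ hz (h ▸ ha), fun y hy ↦ ?_⟩
  have hyA : u y ≠ u x₀ := fun h ↦ (Metric.infDist_le_dist_of_mem (x := z) h).not_gt (hza ▸ hy)
  exact ha ▸ (hmin y).lt_of_ne' hyA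

def Itail (N : ℕ) (s δ : ℝ) (u : E N → ℝ) (ξ x : E N) : ℝ :=
  ∫ τ in Ioi δ, (u (x + τ • ξ) + u (x - τ • ξ) - 2 * u x) * τ ^ (-(1 + 2 * s))

section Itail

variable {N : ℕ} {s δ : ℝ} {u : E N → ℝ}

/- The body of the first integral in `ItestEval` extends to the end of the line, so with a constant
test function the second integral is integrated over `Ioo 0 δ` as a constant. -/
theorem itestEval_const_self (Cs : ℝ) (hδ : 0 ≤ δ) (ξ x : E N) :
    ItestEval N s Cs δ u (fun _ ↦ u x) ξ x = Cs * (δ * (Cs * Itail N s δ u ξ x)) := by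
  have hzero : u x + u x - 2 * u x = 0 := by ring
  simp only [ItestEval, Itail, hzero, zero_mul, zero_add]
  rw [setIntegral_const, Real.volume_real_Ioo_of_le hδ, sub_zero, smul_eq_mul]

theorem integrableOn_Ioi_Itail_integrand (hs : 0 < s) (hu : Continuous u) (hL1 : MemL1s N s u)
    (hδ : 0 < δ) {ξ : E N} (hξ : ‖ξ‖ = 1) (x : E N) :
    IntegrableOn (fun τ ↦ (u (x + τ • ξ) + u (x - τ • ξ) - 2 * u x) * τ ^ (-(1 + 2 * s)))
      (Ioi δ) := by
  set q := 1 + 2 * s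
  have hq : 1 < q := by linarith
  have hweight : ∀ τ ∈ Ioi δ, τ ^ (-q) ≤ (δ ^ (-q) + 1) / (1 + τ ^ q) := by
    intro τ hτ
    have hτ₀ : 0 < τ := hδ.trans hτ
    rw [le_div_iff₀ (by positivity), mul_add, mul_one, ← Real.rpow_add hτ₀, neg_add_cancel,
      Real.rpow_zero]
    exact add_le_add_left (Real.rpow_le_rpow_of_nonpos hδ (le_of_lt hτ) (by linarith)) 1
  have hdom := (((hL1 x ξ hξ).mono_set (Ioi_subset_Ioi hδ.le)).const_mul (δ ^ (-q) + 1)).add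
    ((integrableOn_Ioi_rpow_of_lt (by linarith : -q < -1) hδ).const_mul (2 * |u x|))
  refine hdom.mono' ?_ ((ae_restrict_iff' measurableSet_Ioi).2 (ae_of_all _ fun τ hτ ↦ ?_))
  · refine ContinuousOn.aestronglyMeasurable (fun τ hτ ↦ ContinuousAt.continuousWithinAt ?_)
      measurableSet_Ioi
    exact (by fun_prop : Continuous fun τ : ℝ ↦ u (x + τ • ξ) + u (x - τ • ξ) - 2 * u x)
      |>.continuousAt.mul (Real.continuousAt_rpow_const _ _ (Or.inl (hδ.trans hτ).ne'))
  · have hpow : 0 ≤ τ ^ (-q) := Real.rpow_nonneg (hδ.trans hτ).le _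
    have hsecond : |u (x + τ • ξ) + u (x - τ • ξ) - 2 * u x|
        ≤ |u (x + τ • ξ)| + |u (x - τ • ξ)| + 2 * |u x| :=
      (abs_sub _ _).trans (add_le_add (abs_add_le _ _) (by rw [abs_mul, abs_two]))
    rw [norm_mul, Real.norm_eq_abs, Real.norm_of_nonneg hpow]
    calc |u (x + τ • ξ) + u (x - τ • ξ) - 2 * u x| * τ ^ (-q)
        ≤ (|u (x + τ • ξ)| + |u (x - τ • ξ)|) * τ ^ (-q) + 2 * |u x| * τ ^ (-q) := by
          rw [← add_mul]; gcongr
      _ ≤ (|u (x + τ • ξ)| + |u (x - τ • ξ)|) * ((δ ^ (-q) + 1) / (1 + τ ^ q))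
            + 2 * |u x| * τ ^ (-q) := by
          gcongr; exact hweight τ hτ
      _ = (δ ^ (-q) + 1) * ((|u (x + τ • ξ)| + |u (x - τ • ξ)|) / (1 + τ ^ q))
            + 2 * |u x| * τ ^ (-q) := by ring

theorem Itail_integrand_nonneg {x : E N} (hmin : ∀ y, u x ≤ u y) (ξ : E N) {τ : ℝ} (hτ : 0 ≤ τ) :
    0 ≤ (u (x + τ • ξ) + u (x - τ • ξ) - 2 * u x) * τ ^ (-(1 + 2 * s)) :=
  mul_nonneg (by linarith [hmin (x + τ • ξ), hmin (x - τ • ξ)]) (Real.rpow_nonneg hτ _)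

theorem Itail_nonneg {x : E N} (hmin : ∀ y, u x ≤ u y) (hδ : 0 ≤ δ) (ξ : E N) :
    0 ≤ Itail N s δ u ξ x :=
  setIntegral_nonneg measurableSet_Ioi fun _ hτ ↦
    Itail_integrand_nonneg hmin ξ (hδ.trans (le_of_lt hτ))

theorem le_Itail_of_le_abs_inner (hs : 0 < s) (hu : Continuous u) (hL1 : MemL1s N s u)
    {a z e : E N} (hmin : ∀ x, u a ≤ u x) (he : ‖e‖ = 1) {c η : ℝ} (hc : 0 < c) (hη : 0 ≤ η)
    (hce : c ≤ |⟪z - a, e⟫_ℝ|)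
    (hnear : ∀ y, dist z y ^ 2 ≤ dist z a ^ 2 - c ^ 2 / 2 → u a + η ≤ u y) :
    η * dist z a ^ (-(1 + 2 * s)) * (c / 2) ≤ Itail N s (c / 4) u e a := by
  set t := |⟪z - a, e⟫_ℝ|
  set p := -(1 + 2 * s)
  have hp : p ≤ 0 := by linarith
  have ht : 0 < t := hc.trans_le hce
  have htd : t ≤ dist z a := by
    simpa [he, dist_eq_norm] using abs_real_inner_le_norm (z - a) e
  have hsecond : ∀ τ ∈ Icc (t / 2) t, η ≤ u (a + τ • e) + u (a - τ • e) - 2 * u a := by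
    intro τ hτ
    have hclose : c ^ 2 ≤ ⟪z - a, e⟫_ℝ ^ 2 := sq_abs ⟪z - a, e⟫_ℝ ▸ pow_le_pow_left₀ hc.le hce 2
    rcases norm_sub_smul_sq_le_or_norm_add_smul_sq_le he (v := z - a) (τ := τ)
      (by linarith [hτ.1]) hτ.2 with h | h
    · have := hnear (a + τ • e) (by
        rw [dist_eq_norm, dist_eq_norm, show z - (a + τ • e) = z - a - τ • e by abel]; linarith)
      linarith [hmin (a - τ • e)]
    · have := hnear (a - τ • e) (by
        rw [dist_eq_norm, dist_eq_norm, show z - (a - τ • e) = z - a + τ • e by abel]; linarith)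
      linarith [hmin (a + τ • e)]
  have hlower : ∀ τ ∈ Icc (t / 2) t,
      η * t ^ p ≤ (u (a + τ • e) + u (a - τ • e) - 2 * u a) * τ ^ p := fun τ hτ ↦
    mul_le_mul (hsecond τ hτ) (Real.rpow_le_rpow_of_nonpos (by linarith [hτ.1]) hτ.2 hp)
      (Real.rpow_nonneg ht.le _) (hη.trans (hsecond τ hτ))
  have hpow : dist z a ^ p ≤ t ^ p := Real.rpow_le_rpow_of_nonpos ht htd hp
  calc η * dist z a ^ p * (c / 2) ≤ η * t ^ p * (t - t / 2) := by gcongr; linarith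
    _ ≤ Itail N s (c / 4) u e a :=
        mul_sub_le_setIntegral_Ioi (integrableOn_Ioi_Itail_integrand hs hu hL1 (by positivity) he a)
          (fun τ hτ ↦ Itail_integrand_nonneg hmin e (by linarith [mem_Ioi.1 hτ]))
          (by linarith) (by linarith) hlower

theorem exists_pos_le_sum_Itail (hs : 0 < s) (hu : Continuous u) (hL1 : MemL1s N s u)
    {a z : E N} (hmin : ∀ x, u a ≤ u x) (hza : z ≠ a)
    (hnear : ∀ y, dist z y < dist z a → u a < u y) :
    ∃ δ > 0, ∃ κ > 0, ∀ ξ : Fin N → E N, Orthonormal ℝ ξ → κ ≤ ∑ i, Itail N s δ u (ξ i) a := by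
  have hN : 0 < N := by
    rcases N with _ | n
    · exact absurd (Subsingleton.elim z a) hza
    · exact n.succ_pos
  have : Nonempty (Fin N) := Fin.pos_iff_nonempty.1 hN
  set d := dist z a with hd_def
  have hd : 0 < d := dist_pos.2 hza
  set c := d / N
  have hc : 0 < c := by positivity
  have hcd : c ≤ d := div_le_self hd.le (by exact_mod_cast hN)
  have hr : √(d ^ 2 - c ^ 2 / 2) < d := by
    rw [Real.sqrt_lt' hd]; nlinarith
  obtain ⟨m, hm, hball⟩ := (isCompact_closedBall z √(d ^ 2 - c ^ 2 / 2)).exists_forall_le'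
    hu.continuousOn fun y hy ↦ hnear y ((Metric.mem_closedBall'.1 hy).trans_lt hr)
  refine ⟨c / 4, by positivity, (m - u a) * d ^ (-(1 + 2 * s)) * (c / 2), by
    have := sub_pos.2 hm; positivity, fun ξ hξ ↦ ?_⟩
  obtain ⟨i, hi⟩ := hξ.exists_sq_norm_le_card_mul_inner_sq (by simp) (z - a)
  have hci : c ≤ |⟪z - a, ξ i⟫_ℝ| := by
    rw [real_inner_comm, Fintype.card_fin, ← dist_eq_norm, ← hd_def] at hi
    have hN1 : (1 : ℝ) ≤ N := by exact_mod_cast hN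
    have hsq : d ^ 2 ≤ (|⟪z - a, ξ i⟫_ℝ| * N) ^ 2 := by
      rw [mul_pow, sq_abs]; nlinarith [sq_nonneg ⟪z - a, ξ i⟫_ℝ]
    rw [div_le_iff₀ (by positivity)]
    exact (pow_le_pow_iff_left₀ hd.le (by positivity) two_ne_zero).1 hsq
  calc (m - u a) * d ^ (-(1 + 2 * s)) * (c / 2) ≤ Itail N s (c / 4) u (ξ i) a :=
        le_Itail_of_le_abs_inner hs hu hL1 hmin (hξ.1 i) hc (sub_pos.2 hm).le hci fun y hy ↦ by
          have := hball y (Metric.mem_closedBall'.2 (Real.le_sqrt_of_sq_le hy))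
          linarith
    _ ≤ ∑ j, Itail N s (c / 4) u (ξ j) a :=
        Finset.single_le_sum (fun j _ ↦ Itail_nonneg hmin (by positivity) (ξ j)) (Finset.mem_univ i)

end Itail

theorem stmt_10_general (N : ℕ)
    (s Cs : ℝ) (hs : s ∈ Ioo (1/2 : ℝ) 1) (hCs : 0 < Cs)
    (u : E N → ℝ) (hcont : Continuous u) (hL1 : MemL1s N s u)
    (hsup : IsSupersolMinus N N s Cs (fun _ => 0) u)
    (x₀ : E N) (hmin : ∀ x, u x₀ ≤ u x) :
    ∀ x y : E N, u x = u y := by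
  suffices hconst : ∀ z, u z = u x₀ from fun x y ↦ by rw [hconst x, hconst y]
  by_contra! ⟨z, hz⟩
  obtain ⟨a, hamin, hza, hnear⟩ := exists_minimizer_nearest hcont hmin hz
  obtain ⟨δ, hδ, κ, hκ, hsum⟩ :=
    exists_pos_le_sum_Itail (by linarith [hs.1]) hcont hL1 hamin hza hnear
  have hvisc := hsup a δ hδ (fun _ ↦ u a) contDiffOn_const fun y _ ↦ by simpa using hamin y
  simp only [add_zero, itestEval_const_self Cs hδ.le, ← Finset.mul_sum] at hvisc
  have : Nonempty {ξ : Fin N → E N // Orthonormal ℝ ξ} :=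
    ⟨⟨_, (EuclideanSpace.basisFun (Fin N) ℝ).orthonormal⟩⟩
  have hbound : Cs * (δ * (Cs * κ)) ≤
      ⨅ ξ : {ξ : Fin N → E N // Orthonormal ℝ ξ}, Cs * (δ * (Cs * ∑ i, Itail N s δ u (ξ.1 i) a)) :=
    le_ciInf fun ξ ↦ by gcongr; exact hsum ξ.1 ξ.2
  have : 0 < Cs * (δ * (Cs * κ)) := by positivity
  linarith

theorem stmt_10 (N : ℕ) (hN : 1 ≤ N)
    (s Cs : ℝ) (hs : s ∈ Ioo (1/2 : ℝ) 1) (hCs : 0 < Cs)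
    (u : E N → ℝ) (hcont : Continuous u) (hL1 : MemL1s N s u)
    (hsup : IsSupersolMinus N N s Cs (fun _ => 0) u)
    (x₀ : E N) (hmin : ∀ x, u x₀ ≤ u x) :
    ∀ x y : E N, u x = u y :=
  stmt_10_general N s Cs hs hCs u hcont hL1 hsup x₀ hmin
end
end

section
/- Let N ≥ 2, 1 ≤ k < N, and s ∈ (1/2,1). Then for every p ≥ 1 there exists a positive, bounded, smooth function u ∈ C²(ℝ^N) with 𝓘_k^- u(x) + u(x)^p = 0 for every x ∈ ℝ^N. Explicitly: if p > 1 there exists α > 0 such that u(x) = α (1+|x|²)^{−s/(p−1)} is such a solution, and if p = 1 there exist β > 0 and b > 0 such that u(x) = b·e^{−β|x|²} is such a solution. -/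
open MeasureTheory Real Set

noncomputable section

/-!
For a radial `u x = φ (‖x‖²)` and a unit vector `ξ`, `u (x ± τ ξ) = φ (m ± h)` with
`m = ‖x‖² + τ²` and `h = 2 τ ⟪x, ξ⟫`. Convexity of `φ` gives `φ (m + h) + φ (m - h) ≥ 2 φ m`,
with equality when `ξ ⊥ x`. As `k < N`, some orthonormal `k`-frame is orthogonal to `x`, so the
infimum in `𝓘_k^-` is attained there:
`𝓘_k^- u x = 2 k C_s ∫₀^∞ (φ (‖x‖² + τ²) - φ (‖x‖²)) τ^(-1-2s) dτ`.
For `φ t = (1 + t)^(-γ)` and `φ t = e^(-β t)` the substitution `τ ↦ c τ` makes this a negative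
constant times `(1 + ‖x‖²)^(-γ-s)`, resp. `β^s e^(-β ‖x‖²)`. Taking `γ = s / (p - 1)`, so that
`u^p` is also a multiple of `(1 + ‖x‖²)^(-γ-s)`, resp. `p = 1`, the equation reduces to a scalar
equation for `α`, resp. `β`.
-/

open scoped RealInnerProductSpace

theorem Convex.image_sub_mem_Icc_of_hasDerivAt {D : Set ℝ} (hD : Convex ℝ D) {f f' : ℝ → ℝ}
    (hf : ∀ x ∈ D, HasDerivAt f (f' x) x) {lo hi : ℝ} (hlo : ∀ x ∈ D, lo ≤ f' x)
    (hhi : ∀ x ∈ D, f' x ≤ hi) {x y : ℝ} (hx : x ∈ D) (hy : y ∈ D) (hxy : x ≤ y) :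
    f y - f x ∈ Icc (lo * (y - x)) (hi * (y - x)) := by
  have hcont : ContinuousOn f D := fun z hz => (hf z hz).continuousAt.continuousWithinAt
  have hdiff : DifferentiableOn ℝ f (interior D) := fun z hz =>
    (hf z (interior_subset hz)).differentiableAt.differentiableWithinAt
  have hderiv : ∀ z ∈ interior D, deriv f z = f' z := fun z hz => (hf z (interior_subset hz)).deriv
  exact ⟨hD.mul_sub_le_image_sub_of_le_deriv hcont hdiff
      (fun z hz => hderiv z hz ▸ hlo z (interior_subset hz)) x hx y hy hxy,
    hD.image_sub_le_mul_sub_of_deriv_le hcont hdiff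
      (fun z hz => hderiv z hz ▸ hhi z (interior_subset hz)) x hx y hy hxy⟩

theorem setIntegral_pos_of_pos {X : Type*} [MeasurableSpace X] {μ : Measure X} {s : Set X}
    {f : X → ℝ} (hs : MeasurableSet s) (hμs : μ s ≠ 0) (hf : IntegrableOn f s μ)
    (hpos : ∀ x ∈ s, 0 < f x) : 0 < ∫ x in s, f x ∂μ := by
  have hsupp : Function.support f ∩ s = s :=
    inter_eq_right.2 fun x hx => (hpos x hx).ne'
  rw [setIntegral_pos_iff_support_of_nonneg_ae ((ae_restrict_mem hs).mono
    fun x hx => (hpos x hx).le) hf, hsupp]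
  exact pos_iff_ne_zero.2 hμs

theorem integrableOn_Ioi_mul_rpow_of_abs_le {s : ℝ} (hs0 : 0 < s) (hs1 : s < 1) {f : ℝ → ℝ}
    (hf : ContinuousOn f (Ioi 0)) {C₁ C₂ : ℝ} (h₁ : ∀ τ > 0, |f τ| ≤ C₁ * τ ^ 2)
    (h₂ : ∀ τ > 0, |f τ| ≤ C₂) :
    IntegrableOn (fun τ => f τ * τ ^ (-(1 + 2*s))) (Ioi 0) := by
  have hcont : ContinuousOn (fun τ : ℝ => f τ * τ ^ (-(1 + 2*s))) (Ioi 0) :=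
    hf.mul fun τ hτ => (continuousAt_rpow_const τ _ (Or.inl (ne_of_gt hτ))).continuousWithinAt
  have hnorm : ∀ τ > 0, ‖f τ * τ ^ (-(1 + 2*s))‖ = |f τ| * τ ^ (-(1 + 2*s)) := fun τ hτ => by
    rw [Real.norm_eq_abs, abs_mul, abs_of_nonneg (rpow_nonneg hτ.le _)]
  rw [← Ioc_union_Ioi_eq_Ioi zero_le_one]
  refine IntegrableOn.union ?_ ?_
  · have hmaj : IntegrableOn (fun τ : ℝ => C₁ * τ ^ (1 - 2*s)) (Ioc 0 1) := by
      have := intervalIntegral.intervalIntegrable_rpow' (a := 0) (b := 1) (r := 1 - 2*s)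
        (by linarith)
      exact ((intervalIntegrable_iff_integrableOn_Ioc_of_le zero_le_one).1 this).const_mul C₁
    refine hmaj.mono' ((hcont.mono Ioc_subset_Ioi_self).aestronglyMeasurable measurableSet_Ioc)
      ((ae_restrict_mem measurableSet_Ioc).mono fun τ hτ => ?_)
    have hτ0 : 0 < τ := hτ.1
    rw [hnorm τ hτ0, show 1 - 2*s = 2 + -(1 + 2*s) by ring, rpow_add hτ0, rpow_two,
      ← mul_assoc]
    exact mul_le_mul_of_nonneg_right (h₁ τ hτ0) (rpow_nonneg hτ0.le _)
  · have hmaj : IntegrableOn (fun τ : ℝ => C₂ * τ ^ (-(1 + 2*s))) (Ioi 1) :=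
      (integrableOn_Ioi_rpow_of_lt (by linarith) one_pos).const_mul C₂
    refine hmaj.mono' ((hcont.mono (Ioi_subset_Ioi zero_le_one)).aestronglyMeasurable
      measurableSet_Ioi) ((ae_restrict_mem measurableSet_Ioi).mono fun τ hτ => ?_)
    have hτ0 : 0 < τ := zero_lt_one.trans hτ
    rw [hnorm τ hτ0]
    exact mul_le_mul_of_nonneg_right (h₂ τ hτ0) (rpow_nonneg hτ0.le _)

theorem integral_Ioi_comp_mul_left_mul_rpow (g : ℝ → ℝ) (r : ℝ) {c : ℝ} (hc : 0 < c) :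
    ∫ x in Ioi (0:ℝ), g (c * x) * x ^ r = c ^ (-(r + 1)) * ∫ x in Ioi (0:ℝ), g x * x ^ r := by
  have key := integral_comp_mul_left_Ioi (fun y => g y * y ^ r) 0 hc
  rw [mul_zero, smul_eq_mul] at key
  have hpt : ∀ x ∈ Ioi (0:ℝ), g (c * x) * (c * x) ^ r = c ^ r * (g (c * x) * x ^ r) :=
    fun x hx => by rw [mul_rpow hc.le (le_of_lt hx)]; ring
  rw [setIntegral_congr_fun measurableSet_Ioi hpt, integral_const_mul] at key
  rw [neg_add, rpow_add hc, rpow_neg_one, mul_assoc, ← key, ← mul_assoc, ← rpow_add hc,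
    neg_add_cancel, rpow_zero, one_mul]

/-- Profile of the radial function `x ↦ φ (‖x‖²)`; `φ'' ≥ 0` makes `φ` convex on `[0, ∞)`. -/
structure ConvexProfile (φ φ' φ'' : ℝ → ℝ) (B L M : ℝ) : Prop where
  hasDerivAt : ∀ t ∈ Ici (0:ℝ), HasDerivAt φ (φ' t) t
  hasDerivAt_deriv : ∀ t ∈ Ici (0:ℝ), HasDerivAt φ' (φ'' t) t
  abs_apply_le : ∀ t ∈ Ici (0:ℝ), |φ t| ≤ B
  abs_deriv_le : ∀ t ∈ Ici (0:ℝ), |φ' t| ≤ L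
  deriv2_nonneg : ∀ t ∈ Ici (0:ℝ), 0 ≤ φ'' t
  deriv2_le : ∀ t ∈ Ici (0:ℝ), φ'' t ≤ M

namespace ConvexProfile

variable {φ φ' φ'' : ℝ → ℝ} {B L M : ℝ} (hφ : ConvexProfile φ φ' φ'' B L M)
include hφ

theorem continuousOn : ContinuousOn φ (Ici 0) :=
  fun t ht => (hφ.hasDerivAt t ht).continuousAt.continuousWithinAt

theorem deriv2_bound_nonneg : 0 ≤ M :=
  (hφ.deriv2_nonneg 0 self_mem_Ici).trans (hφ.deriv2_le 0 self_mem_Ici)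

theorem const_mul {a : ℝ} (ha : 0 ≤ a) :
    ConvexProfile (fun t => a * φ t) (fun t => a * φ' t) (fun t => a * φ'' t)
      (a * B) (a * L) (a * M) where
  hasDerivAt t ht := (hφ.hasDerivAt t ht).const_mul a
  hasDerivAt_deriv t ht := (hφ.hasDerivAt_deriv t ht).const_mul a
  abs_apply_le t ht := by
    rw [abs_mul, abs_of_nonneg ha]; exact mul_le_mul_of_nonneg_left (hφ.abs_apply_le t ht) ha
  abs_deriv_le t ht := by
    rw [abs_mul, abs_of_nonneg ha]; exact mul_le_mul_of_nonneg_left (hφ.abs_deriv_le t ht) ha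
  deriv2_nonneg t ht := mul_nonneg ha (hφ.deriv2_nonneg t ht)
  deriv2_le t ht := mul_le_mul_of_nonneg_left (hφ.deriv2_le t ht) ha

theorem abs_sub_le {t t' : ℝ} (ht : 0 ≤ t) (htt' : t ≤ t') : |φ t' - φ t| ≤ L * (t' - t) := by
  have hL : ∀ u ∈ Ici (0:ℝ), -L ≤ φ' u := fun u hu => neg_le_of_abs_le (hφ.abs_deriv_le u hu)
  have hR : ∀ u ∈ Ici (0:ℝ), φ' u ≤ L := fun u hu => le_of_abs_le (hφ.abs_deriv_le u hu)
  have h := (convex_Ici 0).image_sub_mem_Icc_of_hasDerivAt hφ.hasDerivAt hL hR ht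
    (ht.trans htt') htt'
  exact abs_le.2 ⟨by linarith [h.1], h.2⟩

theorem second_diff_mem_Icc {m h : ℝ} (hhm : |h| ≤ m) :
    φ (m + h) + φ (m - h) - 2 * φ m ∈ Icc 0 (2 * M * h ^ 2) := by
  set a := |h|
  have ha : 0 ≤ a := abs_nonneg h
  have hsym : φ (m + h) + φ (m - h) = φ (m + a) + φ (m - a) := by
    rcases abs_choice h with e | e <;> rw [show a = _ from e]
    rw [sub_neg_eq_add, ← sub_eq_add_neg, add_comm]
  have hsq : h ^ 2 = a ^ 2 := (sq_abs h).symm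
  rw [hsym, hsq]
  have hψ' : ∀ t ∈ Icc 0 a,
      HasDerivAt (fun t => φ (m + t) + φ (m - t)) (φ' (m + t) - φ' (m - t)) t := by
    intro t ht
    have h₁ := (hφ.hasDerivAt (m + t) (by simp only [mem_Ici]; linarith [ht.1])).comp t
      ((hasDerivAt_id t).const_add m)
    have h₂ := (hφ.hasDerivAt (m - t) (by simp only [mem_Ici]; linarith [ht.2])).comp t
      ((hasDerivAt_id t).const_sub m)
    exact (h₁.add h₂).congr_deriv (by ring)
  have hbound : ∀ t ∈ Icc 0 a, φ' (m + t) - φ' (m - t) ∈ Icc 0 (2 * M * a) := by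
    intro t ht
    have h := (convex_Ici 0).image_sub_mem_Icc_of_hasDerivAt hφ.hasDerivAt_deriv
      hφ.deriv2_nonneg hφ.deriv2_le (x := m - t) (y := m + t)
      (by simp only [mem_Ici]; linarith [ht.2]) (by simp only [mem_Ici]; linarith [ht.1])
      (by linarith [ht.1])
    refine ⟨by linarith [h.1], h.2.trans ?_⟩
    nlinarith [ht.2, hφ.deriv2_bound_nonneg]
  have h := (convex_Icc 0 a).image_sub_mem_Icc_of_hasDerivAt hψ' (fun t ht => (hbound t ht).1)
    (fun t ht => (hbound t ht).2) (left_mem_Icc.2 ha) (right_mem_Icc.2 ha) ha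
  simp only [add_zero, sub_zero, zero_mul] at h
  exact ⟨by linarith [h.1], by linarith [h.2]⟩

end ConvexProfile

section Radial

variable {F : Type*} [NormedAddCommGroup F] [InnerProductSpace ℝ F]

theorem norm_add_smul_sq_of_norm_eq_one {ξ : F} (hξ : ‖ξ‖ = 1) (x : F) (τ : ℝ) :
    ‖x + τ • ξ‖ ^ 2 = ‖x‖ ^ 2 + τ ^ 2 + 2 * τ * ⟪x, ξ⟫ := by
  rw [norm_add_sq_real, inner_smul_right, norm_smul, hξ, Real.norm_eq_abs, mul_one, sq_abs]
  ring

theorem norm_sub_smul_sq_of_norm_eq_one {ξ : F} (hξ : ‖ξ‖ = 1) (x : F) (τ : ℝ) :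
    ‖x - τ • ξ‖ ^ 2 = ‖x‖ ^ 2 + τ ^ 2 - 2 * τ * ⟪x, ξ⟫ := by
  rw [norm_sub_sq_real, inner_smul_right, norm_smul, hξ, Real.norm_eq_abs, mul_one, sq_abs]
  ring

theorem radial_second_diff_of_inner_eq_zero (φ : ℝ → ℝ) {x ξ : F} (hξ : ‖ξ‖ = 1)
    (hxξ : ⟪x, ξ⟫ = 0) (τ : ℝ) :
    φ (‖x + τ • ξ‖ ^ 2) + φ (‖x - τ • ξ‖ ^ 2) - 2 * φ (‖x‖ ^ 2)
      = 2 * (φ (‖x‖ ^ 2 + τ ^ 2) - φ (‖x‖ ^ 2)) := by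
  rw [norm_add_smul_sq_of_norm_eq_one hξ, norm_sub_smul_sq_of_norm_eq_one hξ, hxξ]
  ring_nf

namespace ConvexProfile

variable {φ φ' φ'' : ℝ → ℝ} {B L M : ℝ} (hφ : ConvexProfile φ φ' φ'' B L M)
include hφ

theorem radial_second_diff_sub_mem_Icc {ξ : F} (hξ : ‖ξ‖ = 1) (x : F) (τ : ℝ) :
    φ (‖x + τ • ξ‖ ^ 2) + φ (‖x - τ • ξ‖ ^ 2) - 2 * φ (‖x‖ ^ 2 + τ ^ 2)
      ∈ Icc 0 (8 * M * ‖x‖ ^ 2 * τ ^ 2) := by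
  have hinner : |⟪x, ξ⟫| ≤ ‖x‖ := by simpa [hξ] using abs_real_inner_le_norm x ξ
  have hh : |2 * τ * ⟪x, ξ⟫| ≤ ‖x‖ ^ 2 + τ ^ 2 := by
    rw [abs_mul, abs_mul, abs_two]
    nlinarith [sq_nonneg (‖x‖ - |τ|), sq_abs τ, abs_nonneg τ]
  have hh2 : (2 * τ * ⟪x, ξ⟫) ^ 2 ≤ 4 * ‖x‖ ^ 2 * τ ^ 2 := by
    have : ⟪x, ξ⟫ ^ 2 ≤ ‖x‖ ^ 2 := by
      rw [← sq_abs]; exact pow_le_pow_left₀ (abs_nonneg _) hinner 2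
    nlinarith [sq_nonneg τ]
  have h := hφ.second_diff_mem_Icc hh
  rw [norm_add_smul_sq_of_norm_eq_one hξ, norm_sub_smul_sq_of_norm_eq_one hξ]
  exact ⟨h.1, h.2.trans (by nlinarith [hφ.deriv2_bound_nonneg])⟩

end ConvexProfile

end Radial

theorem exists_orthonormal_forall_inner_eq_zero {F : Type*} [NormedAddCommGroup F]
    [InnerProductSpace ℝ F] [FiniteDimensional ℝ F] {k : ℕ} (hk : k < Module.finrank ℝ F)
    (x : F) : ∃ ξ : Fin k → F, Orthonormal ℝ ξ ∧ ∀ i, ⟪x, ξ i⟫ = 0 := by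
  have hK : k ≤ Module.finrank ℝ (ℝ ∙ x)ᗮ := by
    have hsum := Submodule.finrank_add_finrank_orthogonal (ℝ ∙ x)
    have hline : Module.finrank ℝ (ℝ ∙ x) ≤ 1 := by
      simpa using finrank_span_le_card ({x} : Set F)
    omega
  let b := stdOrthonormalBasis ℝ (ℝ ∙ x)ᗮ
  refine ⟨fun i => b (Fin.castLE hK i), ?_, fun i => ?_⟩
  · exact (b.orthonormal.comp_linearIsometry (ℝ ∙ x)ᗮ.subtypeₗᵢ).comp _ (Fin.castLE_injective hK)
  · exact Submodule.mem_orthogonal_singleton_iff_inner_right.1 (b (Fin.castLE hK i)).2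

/-- For `ξ ⊥ x`, `𝓘_ξ (φ ∘ ‖·‖²) x = 2 C_s · Jint s φ ‖x‖²`. -/
def Jint (s : ℝ) (φ : ℝ → ℝ) (t : ℝ) : ℝ :=
  ∫ τ in Ioi (0:ℝ), (φ (t + τ ^ 2) - φ t) * τ ^ (-(1 + 2*s))

theorem Iop_radial_of_inner_eq_zero {N : ℕ} (s Cs : ℝ) (φ : ℝ → ℝ) {x ξ : E N} (hξ : ‖ξ‖ = 1)
    (hxξ : ⟪x, ξ⟫ = 0) :
    Iop N s Cs (fun y => φ (‖y‖ ^ 2)) ξ x = 2 * Cs * Jint s φ (‖x‖ ^ 2) := by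
  simp only [Iop, Jint, radial_second_diff_of_inner_eq_zero φ hξ hxξ, mul_assoc,
    integral_const_mul]
  ring

namespace ConvexProfile

variable {φ φ' φ'' : ℝ → ℝ} {B L M s : ℝ} (hφ : ConvexProfile φ φ' φ'' B L M)
include hφ

theorem integrableOn_Jint_integrand (hs0 : 0 < s) (hs1 : s < 1) {t : ℝ} (ht : 0 ≤ t) :
    IntegrableOn (fun τ => (φ (t + τ ^ 2) - φ t) * τ ^ (-(1 + 2*s))) (Ioi 0) := by
  have hcont : Continuous fun τ : ℝ => φ (t + τ ^ 2) :=
    hφ.continuousOn.comp_continuous (by fun_prop) fun τ => mem_Ici.2 (by positivity)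
  refine integrableOn_Ioi_mul_rpow_of_abs_le hs0 hs1 (hcont.sub continuous_const).continuousOn
    (C₁ := L) (C₂ := 2 * B) (fun τ _ => ?_) (fun τ _ => ?_)
  · simpa using hφ.abs_sub_le ht (le_add_of_nonneg_right (sq_nonneg τ))
  · have h₁ := hφ.abs_apply_le (t + τ ^ 2) (mem_Ici.2 (by positivity))
    have h₂ := hφ.abs_apply_le t ht
    exact (abs_sub _ _).trans (by linarith)

theorem Jint_neg (hs0 : 0 < s) (hs1 : s < 1) {t : ℝ} (ht : 0 ≤ t)
    (hdec : ∀ τ > 0, φ (t + τ ^ 2) < φ t) : Jint s φ t < 0 := by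
  have h := setIntegral_pos_of_pos measurableSet_Ioi (by simp)
    (hφ.integrableOn_Jint_integrand hs0 hs1 ht).neg fun τ (hτ : 0 < τ) =>
      neg_pos.2 (mul_neg_of_neg_of_pos (sub_neg.2 (hdec τ hτ)) (rpow_pos_of_pos hτ _))
  simp only [Pi.neg_apply, integral_neg] at h
  exact neg_pos.1 h

theorem integrableOn_radial_second_diff {F : Type*} [NormedAddCommGroup F]
    [InnerProductSpace ℝ F] (hs0 : 0 < s) (hs1 : s < 1) {ξ : F} (hξ : ‖ξ‖ = 1) (x : F) :
    IntegrableOn (fun τ : ℝ =>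
      (φ (‖x + τ • ξ‖ ^ 2) + φ (‖x - τ • ξ‖ ^ 2) - 2 * φ (‖x‖ ^ 2)) * τ ^ (-(1 + 2*s)))
      (Ioi 0) := by
  have hcont : Continuous fun τ : ℝ =>
      φ (‖x + τ • ξ‖ ^ 2) + φ (‖x - τ • ξ‖ ^ 2) - 2 * φ (‖x‖ ^ 2) := by
    have hu : ∀ f : ℝ → F, Continuous f → Continuous fun τ => φ (‖f τ‖ ^ 2) := fun f hf =>
      hφ.continuousOn.comp_continuous (by fun_prop) fun τ => mem_Ici.2 (sq_nonneg _)
    exact ((hu _ (by fun_prop)).add (hu _ (by fun_prop))).sub continuous_const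
  refine integrableOn_Ioi_mul_rpow_of_abs_le hs0 hs1 hcont.continuousOn
    (C₁ := 8 * M * ‖x‖ ^ 2 + 2 * L) (C₂ := 4 * B) (fun τ _ => ?_) (fun τ _ => ?_)
  · have hexcess := hφ.radial_second_diff_sub_mem_Icc hξ x τ
    have hlip := abs_le.1 (hφ.abs_sub_le (sq_nonneg ‖x‖)
      (le_add_of_nonneg_right (sq_nonneg τ)))
    rw [add_sub_cancel_left] at hlip
    refine abs_le.2 ⟨?_, ?_⟩ <;> nlinarith [hexcess.1, hexcess.2, hlip.1, hlip.2]
  · have h₁ := abs_le.1 (hφ.abs_apply_le _ (mem_Ici.2 (sq_nonneg ‖x + τ • ξ‖)))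
    have h₂ := abs_le.1 (hφ.abs_apply_le _ (mem_Ici.2 (sq_nonneg ‖x - τ • ξ‖)))
    have h₃ := abs_le.1 (hφ.abs_apply_le _ (mem_Ici.2 (sq_nonneg ‖x‖)))
    exact abs_le.2 ⟨by linarith, by linarith⟩

theorem Iop_radial_ge {N : ℕ} (hs0 : 0 < s) (hs1 : s < 1) {Cs : ℝ} (hCs : 0 ≤ Cs) (x : E N)
    {ξ : E N} (hξ : ‖ξ‖ = 1) :
    2 * Cs * Jint s φ (‖x‖ ^ 2) ≤ Iop N s Cs (fun y => φ (‖y‖ ^ 2)) ξ x := by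
  rw [Iop, Jint, mul_comm 2 Cs, mul_assoc, ← integral_const_mul]
  refine mul_le_mul_of_nonneg_left (setIntegral_mono_on
    ((hφ.integrableOn_Jint_integrand hs0 hs1 (sq_nonneg _)).const_mul 2)
    (hφ.integrableOn_radial_second_diff hs0 hs1 hξ x) measurableSet_Ioi fun τ hτ => ?_) hCs
  rw [← mul_assoc]
  refine mul_le_mul_of_nonneg_right ?_ (rpow_nonneg (le_of_lt hτ) _)
  linarith [(hφ.radial_second_diff_sub_mem_Icc hξ x τ).1]

theorem IkMinus_radial {N k : ℕ} (hkN : k < N) (hs0 : 0 < s) (hs1 : s < 1) {Cs : ℝ}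
    (hCs : 0 ≤ Cs) (x : E N) :
    IkMinus N k s Cs (fun y => φ (‖y‖ ^ 2)) x = k * (2 * Cs * Jint s φ (‖x‖ ^ 2)) := by
  obtain ⟨ξ₀, hξ₀, hxξ₀⟩ :=
    exists_orthonormal_forall_inner_eq_zero (by rwa [finrank_euclideanSpace_fin]) x
  -- the frame `ξ₀ ⊥ x` attains the lower bound of `Iop_radial_ge` in every direction
  refine IsLeast.csInf_eq ⟨⟨⟨ξ₀, hξ₀⟩, ?_⟩, ?_⟩
  · simp [Iop_radial_of_inner_eq_zero s Cs φ (hξ₀.1 _) (hxξ₀ _)]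
  · rintro _ ⟨ξ, rfl⟩
    simpa using Finset.sum_le_sum fun i (_ : i ∈ Finset.univ) =>
      hφ.Iop_radial_ge hs0 hs1 hCs x (ξ.2.1 i)

end ConvexProfile

theorem convexProfile_rpow {γ : ℝ} (hγ : 0 ≤ γ) :
    ConvexProfile (fun t => (1 + t) ^ (-γ)) (fun t => -γ * (1 + t) ^ (-γ - 1))
      (fun t => γ * (γ + 1) * (1 + t) ^ (-γ - 2)) 1 γ (γ * (γ + 1)) := by
  have hbase : ∀ t ∈ Ici (0:ℝ), 0 < 1 + t := fun t ht => by simp only [mem_Ici] at ht; linarith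
  have hpow : ∀ t ∈ Ici (0:ℝ), ∀ e : ℝ, e ≤ 0 → 0 < (1 + t) ^ e ∧ (1 + t) ^ e ≤ 1 :=
    fun t ht e he => ⟨rpow_pos_of_pos (hbase t ht) e,
      rpow_le_one_of_one_le_of_nonpos (by simp only [mem_Ici] at ht; linarith) he⟩
  have hderiv : ∀ e : ℝ, ∀ t ∈ Ici (0:ℝ),
      HasDerivAt (fun t => (1 + t) ^ e) (e * (1 + t) ^ (e - 1)) t := fun e t ht => by
    simpa using ((hasDerivAt_id t).const_add 1).rpow_const (p := e) (Or.inl (hbase t ht).ne')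
  refine ⟨hderiv (-γ), fun t ht => ?_, fun t ht => ?_, fun t ht => ?_, fun t ht => ?_,
    fun t ht => ?_⟩
  · exact ((hderiv (-γ - 1) t ht).const_mul (-γ)).congr_deriv (by ring_nf)
  · rw [abs_of_pos (hpow t ht _ (by linarith)).1]; exact (hpow t ht _ (by linarith)).2
  · rw [abs_mul, abs_neg, abs_of_nonneg hγ, abs_of_pos (hpow t ht _ (by linarith)).1]
    exact mul_le_of_le_one_right hγ (hpow t ht _ (by linarith)).2
  · exact mul_nonneg (by positivity) (hpow t ht _ (by linarith)).1.le
  · exact mul_le_of_le_one_right (by positivity) (hpow t ht _ (by linarith)).2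

theorem convexProfile_exp {β : ℝ} (hβ : 0 ≤ β) :
    ConvexProfile (fun t => exp (-β * t)) (fun t => -β * exp (-β * t))
      (fun t => β ^ 2 * exp (-β * t)) 1 β (β ^ 2) := by
  have hexp : ∀ t ∈ Ici (0:ℝ), exp (-β * t) ≤ 1 := fun t ht =>
    exp_le_one_iff.2 (by simp only [mem_Ici] at ht; nlinarith)
  have hderiv : ∀ t, HasDerivAt (fun t => exp (-β * t)) (-β * exp (-β * t)) t := fun t => by
    simpa [mul_comm] using ((hasDerivAt_id t).const_mul (-β)).exp
  refine ⟨fun t _ => hderiv t, fun t _ => ?_, fun t ht => ?_, fun t ht => ?_,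
    fun t _ => by positivity, fun t ht => mul_le_of_le_one_right (by positivity) (hexp t ht)⟩
  · exact ((hderiv t).const_mul (-β)).congr_deriv (by ring)
  · rw [abs_of_pos (exp_pos _)]; exact hexp t ht
  · rw [abs_mul, abs_neg, abs_of_nonneg hβ, abs_of_pos (exp_pos _)]
    exact mul_le_of_le_one_right hβ (hexp t ht)

theorem Jint_const_mul (s a : ℝ) (φ : ℝ → ℝ) (t : ℝ) :
    Jint s (fun t => a * φ t) t = a * Jint s φ t := by
  simp only [Jint, ← mul_sub, mul_assoc, integral_const_mul]

theorem Jint_rpow (s γ : ℝ) {t : ℝ} (ht : 0 < 1 + t) :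
    Jint s (fun t => (1 + t) ^ (-γ)) t
      = (1 + t) ^ (-(γ + s)) * Jint s (fun t => (1 + t) ^ (-γ)) 0 := by
  set c := (1 + t) ^ (-(1 / 2) : ℝ)
  have hc : 0 < c := rpow_pos_of_pos ht _
  have hc2 : c ^ 2 = (1 + t)⁻¹ := by
    rw [← rpow_natCast, ← rpow_mul ht.le]; norm_num [rpow_neg_one]
  have hpt : ∀ τ ∈ Ioi (0:ℝ), ((1 + (t + τ ^ 2)) ^ (-γ) - (1 + t) ^ (-γ)) * τ ^ (-(1 + 2*s))
      = (1 + t) ^ (-γ) *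
        (((1 + (0 + (c * τ) ^ 2)) ^ (-γ) - (1 + 0) ^ (-γ)) * τ ^ (-(1 + 2*s))) := by
    intro τ _
    have hsplit : 1 + (t + τ ^ 2) = (1 + t) * (1 + (0 + (c * τ) ^ 2)) := by
      rw [mul_pow, hc2]; field_simp; ring
    rw [hsplit, mul_rpow ht.le (by positivity), add_zero, one_rpow]
    ring
  rw [Jint, setIntegral_congr_fun measurableSet_Ioi hpt, integral_const_mul,
    integral_Ioi_comp_mul_left_mul_rpow (fun σ => (1 + (0 + σ ^ 2)) ^ (-γ) - (1 + 0) ^ (-γ)) _ hc,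
    ← rpow_mul ht.le, show -(1 / 2) * -(-(1 + 2 * s) + 1) = -s by ring, ← mul_assoc,
    ← rpow_add ht, neg_add γ s]
  rfl

theorem Jint_exp (s : ℝ) {β : ℝ} (hβ : 0 < β) (t : ℝ) :
    Jint s (fun t => exp (-β * t)) t = β ^ s * exp (-β * t) * Jint s (fun t => exp (-t)) 0 := by
  have hc : 0 < sqrt β := sqrt_pos.2 hβ
  have hpt : ∀ τ ∈ Ioi (0:ℝ), (exp (-β * (t + τ ^ 2)) - exp (-β * t)) * τ ^ (-(1 + 2*s))
      = exp (-β * t) * ((exp (-(0 + (sqrt β * τ) ^ 2)) - exp (-0)) * τ ^ (-(1 + 2*s))) := by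
    intro τ _
    rw [mul_pow, sq_sqrt hβ.le, zero_add, neg_zero, exp_zero, mul_add, exp_add]
    ring_nf
  rw [Jint, setIntegral_congr_fun measurableSet_Ioi hpt, integral_const_mul,
    integral_Ioi_comp_mul_left_mul_rpow (fun σ => exp (-(0 + σ ^ 2)) - exp (-0)) _ hc,
    sqrt_eq_rpow, ← rpow_mul hβ.le, show 1 / 2 * -(-(1 + 2 * s) + 1) = s by ring, Jint]
  ring

section Solutions

variable {N k : ℕ} {s Cs : ℝ}

theorem exists_rpow_solution (hk : 0 < k) (hkN : k < N) (hs0 : 0 < s) (hs1 : s < 1)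
    (hCs : 0 < Cs) {p : ℝ} (hp : 1 < p) :
    ∃ α > (0:ℝ), ∀ x : E N,
      IkMinus N k s Cs (fun y => α * (1 + ‖y‖ ^ 2) ^ (-(s / (p - 1)))) x +
        (α * (1 + ‖x‖ ^ 2) ^ (-(s / (p - 1)))) ^ p = 0 := by
  set γ := s / (p - 1)
  have hγ : 0 < γ := div_pos hs0 (sub_pos.2 hp)
  have hJ : Jint s (fun t => (1 + t) ^ (-γ)) 0 < 0 :=
    (convexProfile_rpow hγ.le).Jint_neg hs0 hs1 le_rfl fun τ hτ => by
      simpa using rpow_lt_one_of_one_lt_of_neg (by nlinarith : 1 < 1 + τ ^ 2) (neg_lt_zero.2 hγ)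
  set A := -(2 * k * Cs * Jint s (fun t => (1 + t) ^ (-γ)) 0)
  have hA : 0 < A := neg_pos.2 (mul_neg_of_pos_of_neg (by positivity) hJ)
  set α := A ^ (p - 1)⁻¹
  have hα : 0 < α := by positivity
  have hαp : α ^ p = A * α := by
    rw [show p = (p - 1) + 1 by ring, rpow_add hα, rpow_one, ← rpow_mul hA.le,
      inv_mul_cancel₀ (sub_pos.2 hp).ne', rpow_one]
  refine ⟨α, hα, fun x => ?_⟩
  have hX : 0 < 1 + ‖x‖ ^ 2 := by positivity
  have hupow : (α * (1 + ‖x‖ ^ 2) ^ (-γ)) ^ p = α ^ p * (1 + ‖x‖ ^ 2) ^ (-(γ + s)) := by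
    rw [mul_rpow hα.le (by positivity), ← rpow_mul hX.le]
    have hγp : γ * (p - 1) = s := div_mul_cancel₀ s (sub_pos.2 hp).ne'
    congr 2
    linear_combination -hγp
  rw [((convexProfile_rpow hγ.le).const_mul hα.le).IkMinus_radial hkN hs0 hs1 hCs.le x,
    Jint_const_mul, Jint_rpow s γ hX, hupow, hαp]
  ring

theorem exists_exp_solution (hk : 0 < k) (hkN : k < N) (hs0 : 0 < s) (hs1 : s < 1)
    (hCs : 0 < Cs) :
    ∃ β > (0:ℝ), ∃ b > (0:ℝ), ∀ x : E N,
      IkMinus N k s Cs (fun y => b * exp (-β * ‖y‖ ^ 2)) x + b * exp (-β * ‖x‖ ^ 2) = 0 := by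
  have hJ : Jint s (fun t => exp (-t)) 0 < 0 := by
    simpa using (convexProfile_exp zero_le_one).Jint_neg hs0 hs1 le_rfl fun τ hτ => by
      simpa using pow_pos hτ 2
  set A := -(2 * k * Cs * Jint s (fun t => exp (-t)) 0)
  have hA : 0 < A := neg_pos.2 (mul_neg_of_pos_of_neg (by positivity) hJ)
  set β := A⁻¹ ^ s⁻¹
  have hβ : 0 < β := by positivity
  have hβs : β ^ s = A⁻¹ := by
    rw [← rpow_mul (by positivity), inv_mul_cancel₀ hs0.ne', rpow_one]
  refine ⟨β, hβ, 1, one_pos, fun x => ?_⟩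
  rw [((convexProfile_exp hβ.le).const_mul zero_le_one).IkMinus_radial hkN hs0 hs1 hCs.le x,
    Jint_const_mul, Jint_exp s hβ, hβs]
  field_simp
  ring

end Solutions

theorem stmt_15_general (N k : ℕ) (hk1 : 1 ≤ k) (hkN : k < N)
    (s Cs : ℝ) (hs : s ∈ Ioo (1/2 : ℝ) 1) (hCs : 0 < Cs)
    (p : ℝ) (hp : 1 ≤ p) :
    (∃ u : E N → ℝ, (∀ x, 0 < u x) ∧ (∃ M : ℝ, ∀ x, u x ≤ M) ∧
      ContDiff ℝ 2 u ∧ ∀ x : E N, IkMinus N k s Cs u x + u x ^ p = 0) ∧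
    (1 < p → ∃ α > (0:ℝ), ∀ x : E N,
      IkMinus N k s Cs (fun y => α * (1 + ‖y‖^2) ^ (-(s / (p - 1)))) x +
        (α * (1 + ‖x‖^2) ^ (-(s / (p - 1)))) ^ p = 0) ∧
    (p = 1 → ∃ β > (0:ℝ), ∃ b > (0:ℝ), ∀ x : E N,
      IkMinus N k s Cs (fun y => b * Real.exp (-β * ‖y‖^2)) x +
        b * Real.exp (-β * ‖x‖^2) = 0) := by
  have hs0 : 0 < s := by linarith [hs.1]
  have hrpow := fun hp1 : 1 < p => exists_rpow_solution hk1 hkN hs0 hs.2 hCs hp1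
  have hexp := exists_exp_solution hk1 hkN hs0 hs.2 hCs
  refine ⟨?_, hrpow, fun _ => hexp⟩
  rcases hp.eq_or_lt with rfl | hp1
  · obtain ⟨β, hβ, b, hb, hsol⟩ := hexp
    have hφ := (convexProfile_exp hβ.le).const_mul hb.le
    refine ⟨fun y => b * exp (-β * ‖y‖ ^ 2), fun x => by positivity,
      ⟨_, fun x => le_of_abs_le (hφ.abs_apply_le _ (sq_nonneg ‖x‖))⟩,
      contDiff_const.mul (contDiff_exp.comp (contDiff_const.mul (contDiff_norm_sq ℝ))),
      fun x => by simpa using hsol x⟩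
  · obtain ⟨α, hα, hsol⟩ := hrpow hp1
    have hγ : 0 ≤ s / (p - 1) := div_nonneg hs0.le (sub_pos.2 hp1).le
    have hφ := (convexProfile_rpow hγ).const_mul hα.le
    refine ⟨fun y => α * (1 + ‖y‖ ^ 2) ^ (-(s / (p - 1))), fun x => by positivity,
      ⟨_, fun x => le_of_abs_le (hφ.abs_apply_le _ (sq_nonneg ‖x‖))⟩, ?_, hsol⟩
    exact contDiff_const.mul ((contDiff_const.add (contDiff_norm_sq ℝ)).rpow_const_of_ne
      fun x => by positivity)

theorem stmt_15 (N k : ℕ) (hN : 2 ≤ N) (hk1 : 1 ≤ k) (hkN : k < N)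
    (s Cs : ℝ) (hs : s ∈ Ioo (1/2 : ℝ) 1) (hCs : 0 < Cs)
    (p : ℝ) (hp : 1 ≤ p) :
    (∃ u : E N → ℝ, (∀ x, 0 < u x) ∧ (∃ M : ℝ, ∀ x, u x ≤ M) ∧
      ContDiff ℝ 2 u ∧ ∀ x : E N, IkMinus N k s Cs u x + u x ^ p = 0) ∧
    (1 < p → ∃ α > (0:ℝ), ∀ x : E N,
      IkMinus N k s Cs (fun y => α * (1 + ‖y‖^2) ^ (-(s / (p - 1)))) x +
        (α * (1 + ‖x‖^2) ^ (-(s / (p - 1)))) ^ p = 0) ∧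
    (p = 1 → ∃ β > (0:ℝ), ∃ b > (0:ℝ), ∀ x : E N,
      IkMinus N k s Cs (fun y => b * Real.exp (-β * ‖y‖^2)) x +
        b * Real.exp (-β * ‖x‖^2) = 0) :=
  stmt_15_general N k hk1 hkN s Cs hs hCs p hp
end
end
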